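/- arXiv:2106.00659 — 7 statements merged into one kernel-verified Lean document; each statement's English description precedes it below -/
import Mathlib

section
/- Let M be a symmetric positive semidefinite n×n real matrix. Then the infimum of trace(Aᵀ M A) over all n×n real matrices A with det A = 1 equals n · (det M)^{1/n}. -/
open Matrix Finset

-- lower bound: AM-GM for PSD matrix
lemma lb {n : ℕ} (B : Matrix (Fin n) (Fin n) ℝ) (hB : B.PosSemidef) :
    (n : ℝ) * B.det ^ ((1 : ℝ) / n) ≤ B.trace := by
  rcases Nat.eq_zero_or_pos n with h | hn
  · subst h; simp
  have h := hB.1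
  have hdet : B.det = ∏ i, h.eigenvalues i := by
    simpa using h.det_eq_prod_eigenvalues
  have htr : B.trace = ∑ i, h.eigenvalues i := by
    have : (star (h.eigenvectorUnitary : Matrix (Fin n) (Fin n) ℝ)) * B *
        (h.eigenvectorUnitary : Matrix (Fin n) (Fin n) ℝ) = diagonal (RCLike.ofReal ∘ h.eigenvalues) := by
      have := h.conjStarAlgAut_star_eigenvectorUnitary
      rw [Unitary.conjStarAlgAut_apply] at this
      simpa using this
    have h2 := congrArg Matrix.trace this
    rw [trace_mul_cycle, (mem_unitaryGroup_iff).mp (h.eigenvectorUnitary).2, one_mul] at h2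
    simpa [Matrix.trace, Matrix.diag] using h2
  have hnn : ∀ i ∈ univ, (0:ℝ) ≤ h.eigenvalues i := fun i _ => hB.eigenvalues_nonneg i
  have amgm := Real.geom_mean_le_arith_mean_weighted univ (fun _ => (1:ℝ)/n) h.eigenvalues
    (fun i _ => by positivity) (by simp [Finset.card_univ]; field_simp) hnn
  rw [hdet, htr]
  have hprod : ∏ i, h.eigenvalues i ^ ((1:ℝ)/n) = (∏ i, h.eigenvalues i) ^ ((1:ℝ)/n) :=
    Real.finset_prod_rpow univ _ hnn _
  rw [hprod] at amgm
  calc (n:ℝ) * (∏ i, h.eigenvalues i) ^ ((1:ℝ)/n)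
      ≤ (n:ℝ) * ∑ i, (1:ℝ)/n * h.eigenvalues i := by
        exact mul_le_mul_of_nonneg_left amgm (by positivity)
    _ = ∑ i, h.eigenvalues i := by
        rw [← Finset.mul_sum, ← mul_assoc]
        field_simp

/-- For a symmetric positive semidefinite matrix `M`,
`inf { trace(AᵀMA) : det A = 1 } = n (det M)^{1/n}`. -/
theorem inf_trace_det_one (n : ℕ) (hn : 0 < n) (M : Matrix (Fin n) (Fin n) ℝ)
    (hM : M.PosSemidef) :
    sInf {x : ℝ | ∃ A : Matrix (Fin n) (Fin n) ℝ, A.det = 1 ∧ x = (Aᵀ * M * A).trace}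
      = n * M.det ^ ((1 : ℝ) / n) := by
  haveI : NeZero n := ⟨hn.ne'⟩
  set S := {x : ℝ | ∃ A : Matrix (Fin n) (Fin n) ℝ, A.det = 1 ∧ x = (Aᵀ * M * A).trace} with hS
  have hne : S.Nonempty := ⟨M.trace, 1, det_one, by simp⟩
  have hlbd : ∀ x ∈ S, (n:ℝ) * M.det ^ ((1:ℝ)/n) ≤ x := by
    rintro x ⟨A, hA, rfl⟩
    have hAH : Aᵀ = Aᴴ := (conjTranspose_eq_transpose_of_trivial A).symm
    have hpsd : (Aᴴ * M * A).PosSemidef := hM.conjTranspose_mul_mul_same A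
    have hd : (Aᴴ * M * A).det = M.det := by
      rw [det_mul, det_mul, hA, mul_one, ← hAH, det_transpose, hA, one_mul]
    have := lb _ hpsd
    rw [hd] at this
    rw [hAH]
    exact this
  have hbdd : BddBelow S := ⟨_, hlbd⟩
  -- spectral data
  have h := hM.1
  set V : Matrix (Fin n) (Fin n) ℝ := (h.eigenvectorUnitary : Matrix (Fin n) (Fin n) ℝ) with hV
  set l : Fin n → ℝ := h.eigenvalues with hl
  have hln : ∀ i, 0 ≤ l i := fun i => hM.eigenvalues_nonneg i
  have hdiag : Vᵀ * M * V = diagonal l := by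
    have : (star (h.eigenvectorUnitary : Matrix (Fin n) (Fin n) ℝ)) * M *
        (h.eigenvectorUnitary : Matrix (Fin n) (Fin n) ℝ) = diagonal (RCLike.ofReal ∘ h.eigenvalues) := by
      have := h.conjStarAlgAut_star_eigenvectorUnitary
      rw [Unitary.conjStarAlgAut_apply] at this
      simpa using this
    simpa [star_eq_conjTranspose, conjTranspose_eq_transpose_of_trivial] using this
  have hdetV : V.det * V.det = 1 := by
    have := congrArg det ((mem_unitaryGroup_iff').mp (h.eigenvectorUnitary).2)
    simpa [star_eq_conjTranspose, conjTranspose_eq_transpose_of_trivial, det_mul,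
      det_transpose] using this
  have hdetM : M.det = ∏ i, l i := by simpa using h.det_eq_prod_eigenvalues
  -- key computation for A = V * diagonal d
  have key : ∀ d : Fin n → ℝ,
      ((V * diagonal d)ᵀ * M * (V * diagonal d)).trace = ∑ i, d i * l i * d i ∧
      (V * diagonal d).det = V.det * ∏ i, d i := by
    intro d
    constructor
    · have e1 : (V * diagonal d)ᵀ * M * (V * diagonal d)
          = diagonal d * (Vᵀ * M * V) * diagonal d := by
        rw [transpose_mul, diagonal_transpose]
        noncomm_ring
      rw [e1, hdiag, diagonal_mul_diagonal, diagonal_mul_diagonal, trace_diagonal]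
    · rw [det_mul, det_diagonal]
  refine le_antisymm ?_ (le_csInf hne hlbd)
  have hMd0 : 0 ≤ M.det := hdetM ▸ Finset.prod_nonneg (fun i _ => hln i)
  rcases eq_or_lt_of_le hMd0 with hdet0 | hdetpos
  · -- singular case: det M = 0
    rw [← hdet0, Real.zero_rpow (by positivity : (1:ℝ)/n ≠ 0), mul_zero]
    obtain ⟨k, -, hk⟩ := Finset.prod_eq_zero_iff.mp (hdetM ▸ hdet0.symm)
    rw [Real.sInf_le_iff hbdd hne]
    intro ε hε
    set T : ℝ := ∑ i, l i with hT
    have hT0 : 0 ≤ T := Finset.sum_nonneg fun i _ => hln i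
    set s : ℝ := min 1 (ε / (2 * (T + 1))) with hs
    have hs0 : 0 < s := lt_min one_pos (by positivity)
    have hs1 : s ≤ 1 := min_le_left _ _
    set d : Fin n → ℝ := fun i => if i = k then V.det / s ^ (n - 1) else s with hd
    obtain ⟨htr, hdA⟩ := key d
    have hprod : ∏ i, d i = V.det := by
      rw [← Finset.mul_prod_erase univ d (mem_univ k)]
      have : ∏ i ∈ univ.erase k, d i = s ^ (n - 1) := by
        have e0 : ∏ i ∈ univ.erase k, d i = ∏ _i ∈ univ.erase k, s :=
          Finset.prod_congr rfl (fun i hi => by simp [hd, (Finset.mem_erase.mp hi).1])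
        rw [e0, Finset.prod_const, Finset.card_erase_of_mem (mem_univ k), Finset.card_univ,
          Fintype.card_fin]
      rw [this]
      simp only [hd, if_pos rfl]
      field_simp
    refine ⟨_, ⟨V * diagonal d, by rw [hdA, hprod]; exact hdetV, rfl⟩, ?_⟩
    rw [htr, zero_add]
    have hsum : ∑ i, d i * l i * d i ≤ s * T := by
      have : ∀ i ∈ univ, d i * l i * d i ≤ s * l i := by
        intro i _
        by_cases hik : i = k
        · subst hik; simp [hk]
        · simp only [hd, if_neg hik]
          nlinarith [mul_nonneg (mul_nonneg hs0.le (hln i)) (sub_nonneg.mpr hs1)]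
      calc ∑ i, d i * l i * d i ≤ ∑ i, s * l i := Finset.sum_le_sum this
        _ = s * T := by rw [Finset.mul_sum]
    have hsε : s * T < ε := by
      have h2 : s ≤ ε / (2 * (T + 1)) := min_le_right _ _
      calc s * T ≤ (ε / (2 * (T + 1))) * T := mul_le_mul_of_nonneg_right h2 hT0
        _ < ε := by
          rw [div_mul_eq_mul_div, div_lt_iff₀ (by positivity)]
          nlinarith
    linarith
  · -- positive definite case
    have hli : ∀ i, 0 < l i := by
      intro i
      rcases (hln i).eq_or_lt with h0 | h0
      · exfalso
        have : M.det = 0 := by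
          rw [hdetM]
          exact Finset.prod_eq_zero (mem_univ i) h0.symm
        rw [this] at hdetpos; exact lt_irrefl _ hdetpos
      · exact h0
    set c : ℝ := M.det ^ ((1:ℝ)/(2*n)) with hc
    have hc0 : 0 < c := Real.rpow_pos_of_pos hdetpos _
    set sg : Fin n → ℝ := fun i => if i = (0 : Fin n) then V.det else 1 with hsg
    have hsg2 : ∀ i, sg i * sg i = 1 := by
      intro i; by_cases hi : i = 0 <;> simp [hsg, hi, hdetV]
    set d : Fin n → ℝ := fun i => sg i * (c * (l i) ^ (-(1:ℝ)/2)) with hd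
    obtain ⟨htr, hdA⟩ := key d
    have hcc : c * c = M.det ^ ((1:ℝ)/n) := by
      rw [hc, ← Real.rpow_add hdetpos]
      congr 1
      have hn' : (n:ℝ) ≠ 0 := Nat.cast_ne_zero.mpr hn.ne'
      field_simp
      norm_num
    have hterm : ∀ i, d i * l i * d i = M.det ^ ((1:ℝ)/n) := by
      intro i
      have : d i * l i * d i = (sg i * sg i) * (c * c) * ((l i) ^ (-(1:ℝ)/2) * (l i) ^ (-(1:ℝ)/2) * l i) := by
        simp only [hd]; ring
      rw [this, hsg2, one_mul, hcc]
      have : (l i) ^ (-(1:ℝ)/2) * (l i) ^ (-(1:ℝ)/2) * l i = 1 := by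
        rw [← Real.rpow_add (hli i)]
        have : (-(1:ℝ)/2 + -(1:ℝ)/2) = -1 := by norm_num
        rw [this, Real.rpow_neg_one, inv_mul_cancel₀ (hli i).ne']
      rw [this, mul_one]
    have hprod : ∏ i, d i = V.det := by
      have e1 : ∏ i, d i
          = (∏ i : Fin n, sg i) * ((∏ _i : Fin n, (c : ℝ)) * ∏ i : Fin n, (l i) ^ (-(1:ℝ)/2)) := by
        rw [← Finset.prod_mul_distrib, ← Finset.prod_mul_distrib]
      have e2 : ∏ i, sg i = V.det := by
        rw [hsg, Finset.prod_ite_eq' univ (0 : Fin n) (fun _ => V.det)]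
        simp
      have e3 : (∏ _i : Fin n, (c : ℝ)) = M.det ^ (((1:ℝ)/(2*n)) * n) := by
        rw [Finset.prod_const, Finset.card_univ, Fintype.card_fin, hc,
          ← Real.rpow_natCast (M.det ^ ((1:ℝ)/(2*n))) n, ← Real.rpow_mul hdetpos.le]
      have e4 : ∏ i, (l i) ^ (-(1:ℝ)/2) = M.det ^ (-(1:ℝ)/2) := by
        rw [Real.finset_prod_rpow univ _ (fun i _ => (hli i).le), ← hdetM]
      rw [e1, e2, e3, e4, ← Real.rpow_add hdetpos]
      have : ((1:ℝ)/(2*n)) * n + (-(1:ℝ)/2) = 0 := by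
        have hn' : (n:ℝ) ≠ 0 := Nat.cast_ne_zero.mpr hn.ne'
        field_simp
        ring
      rw [this, Real.rpow_zero, mul_one]
    apply csInf_le hbdd
    refine ⟨V * diagonal d, by rw [hdA, hprod]; exact hdetV, ?_⟩
    rw [htr]
    rw [Finset.sum_congr rfl (fun i _ => hterm i), Finset.sum_const, Finset.card_univ,
      Fintype.card_fin, nsmul_eq_mul]
end

section
/- Let M be a symmetric positive definite n×n real matrix and set θ₀ = ((det M)^{1/n} / λ_min(M))^{1/2}, where λ_min(M) is the smallest eigenvalue of M. Then for every θ > θ₀, the infimum of trace(Aᵀ M A) over all real n×n matrices A with det A = 1 equals the infimum of the same quantity over matrices A with det A = 1 that additionally satisfy A ≤ θI (meaning θI − A is positive semidefinite, for symmetric positive definite A). -/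
open Matrix

private lemma posDef_of_posSemidef_det_ne_zero {n : ℕ} {B : Matrix (Fin n) (Fin n) ℝ}
    (hB : B.PosSemidef) (hdet : B.det ≠ 0) : B.PosDef := by
  refine PosDef.of_dotProduct_mulVec_pos hB.1 (fun x hx => ?_)
  rcases lt_or_eq_of_le (hB.dotProduct_mulVec_nonneg x) with h | h
  · simpa using h
  · exfalso
    have h0 : B *ᵥ x = 0 := (hB.dotProduct_mulVec_zero_iff x).mp (by simpa using h.symm)
    exact hdet ((Matrix.exists_mulVec_eq_zero_iff).mp ⟨x, hx, h0⟩)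

private lemma trace_eq_sum_eigenvalues {n : ℕ} {B : Matrix (Fin n) (Fin n) ℝ}
    (hB : B.IsHermitian) : B.trace = ∑ i, hB.eigenvalues i := by
  conv_lhs => rw [hB.spectral_theorem, Unitary.conjStarAlgAut_apply]
  rw [trace_mul_cycle]
  simp [Matrix.trace_diagonal]

/-- AM-GM lower bound: for any `A` with `det A = 1`, `n * (det M)^(1/n) ≤ trace (Aᵀ M A)`. -/
private lemma trace_lower_bound {n : ℕ} (hn : 0 < n) {M : Matrix (Fin n) (Fin n) ℝ}
    (hM : M.PosDef) {A : Matrix (Fin n) (Fin n) ℝ} (hA : A.det = 1) :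
    (n : ℝ) * M.det ^ ((1 : ℝ) / n) ≤ (Aᵀ * M * A).trace := by
  have hB : (Aᵀ * M * A).PosSemidef := by
    have := hM.posSemidef.conjTranspose_mul_mul_same A
    simpa using this
  set B := Aᵀ * M * A with hBdef
  have hdetB : B.det = M.det := by
    simp [hBdef, Matrix.det_mul, hA, Matrix.det_transpose]
  have hν : ∀ i, 0 ≤ hB.1.eigenvalues i := fun i => hB.eigenvalues_nonneg i
  have hprod : ∏ i, hB.1.eigenvalues i = M.det := by
    have := hB.1.det_eq_prod_eigenvalues
    simp only [RCLike.ofReal_real_eq_id, id] at this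
    rw [← hdetB, this]
  have hsum : B.trace = ∑ i, hB.1.eigenvalues i := trace_eq_sum_eigenvalues hB.1
  have hamgm := Real.geom_mean_le_arith_mean_weighted Finset.univ
      (fun _ => (1 : ℝ) / n) (fun i => hB.1.eigenvalues i)
      (fun i _ => by positivity) (by
        simp [Finset.sum_const, Finset.card_univ]
        field_simp) (fun i _ => hν i)
  have hlhs : ∏ i, hB.1.eigenvalues i ^ ((1 : ℝ) / n) = M.det ^ ((1 : ℝ) / n) := by
    rw [Real.finset_prod_rpow Finset.univ _ (fun i _ => hν i), hprod]
  have hrhs : ∑ i : Fin n, (1 : ℝ) / n * hB.1.eigenvalues i = B.trace / n := by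
    rw [hsum, ← Finset.mul_sum, one_div, inv_mul_eq_div]
  rw [hlhs, hrhs] at hamgm
  have hn' : (0 : ℝ) < n := by exact_mod_cast hn
  calc (n : ℝ) * M.det ^ ((1 : ℝ) / n) ≤ (n : ℝ) * (B.trace / n) := by
        exact mul_le_mul_of_nonneg_left hamgm (le_of_lt hn')
    _ = B.trace := by field_simp

/-- For a symmetric positive definite `M`, and any `θ > θ₀ = ((det M)^{1/n}/λ_min(M))^{1/2}`,
the infimum of `trace(AᵀMA)` over `det A = 1` coincides with the infimum restricted to
symmetric positive definite `A` with `A ≤ θI`. -/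
theorem inf_trace_eq_inf_trace_bounded (n : ℕ) (hn : 0 < n) (M : Matrix (Fin n) (Fin n) ℝ)
    (hM : M.PosDef) (lmin : ℝ)
    (hlmin_eig : ∃ v : Fin n → ℝ, v ≠ 0 ∧ M.mulVec v = lmin • v)
    (hlmin_min : ∀ μ : ℝ, (∃ v : Fin n → ℝ, v ≠ 0 ∧ M.mulVec v = μ • v) → lmin ≤ μ)
    (θ : ℝ) (hθ : Real.sqrt (M.det ^ ((1 : ℝ) / n) / lmin) < θ) :
    sInf {x : ℝ | ∃ A : Matrix (Fin n) (Fin n) ℝ, A.det = 1 ∧ x = (Aᵀ * M * A).trace}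
      = sInf {x : ℝ | ∃ A : Matrix (Fin n) (Fin n) ℝ, A.PosDef ∧ A.det = 1 ∧
          (θ • (1 : Matrix (Fin n) (Fin n) ℝ) - A).PosSemidef ∧ x = (Aᵀ * M * A).trace} := by
  have hH : M.IsHermitian := hM.1
  set d : ℝ := M.det with hd_def
  have hd : 0 < d := hM.det_pos
  have hn' : (0 : ℝ) < n := by exact_mod_cast hn
  -- lmin is positive
  have hlmin_pos : 0 < lmin := by
    obtain ⟨v, hv, hMv⟩ := hlmin_eig
    have h2 := hM.dotProduct_mulVec_pos hv
    rw [hMv] at h2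
    simp only [star_trivial, dotProduct_smul, smul_eq_mul] at h2
    have hvv : 0 ≤ v ⬝ᵥ v := by
      simpa [dotProduct] using Finset.sum_nonneg (fun i _ => mul_self_nonneg (v i))
    nlinarith
  -- eigen-data for M
  set μ : Fin n → ℝ := hH.eigenvalues with hμ_def
  set U : Matrix (Fin n) (Fin n) ℝ := (IsHermitian.eigenvectorUnitary hH : Matrix (Fin n) (Fin n) ℝ)
    with hU_def
  have hUU : Uᵀ * U = 1 := mem_unitaryGroup_iff'.mp (IsHermitian.eigenvectorUnitary hH).2
  have hUU' : U * Uᵀ = 1 := mem_unitaryGroup_iff.mp (IsHermitian.eigenvectorUnitary hH).2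
  have hspec : M = U * diagonal μ * Uᵀ := by simpa [star_eq_conjTranspose, conjTranspose_eq_transpose_of_trivial] using hH.spectral_theorem
  have hμpos : ∀ i, 0 < μ i := fun i => hM.eigenvalues_pos i
  have hlμ : ∀ i, lmin ≤ μ i := by
    intro i
    refine hlmin_min (μ i) ⟨⇑(hH.eigenvectorBasis i), ?_, hH.mulVec_eigenvectorBasis i⟩
    have := hH.eigenvectorBasis.toBasis.ne_zero i
    simpa using this
  -- the constant c
  set c : ℝ := Real.sqrt (d ^ ((1 : ℝ) / n)) with hc_def
  have hdr : 0 < d ^ ((1 : ℝ) / n) := Real.rpow_pos_of_pos hd _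
  have hc : 0 < c := Real.sqrt_pos.mpr hdr
  have hc2 : c ^ 2 = d ^ ((1 : ℝ) / n) := Real.sq_sqrt hdr.le
  -- the minimizer A₀
  set e : Fin n → ℝ := fun i => c / Real.sqrt (μ i) with he_def
  have he_pos : ∀ i, 0 < e i := fun i => div_pos hc (Real.sqrt_pos.mpr (hμpos i))
  set A₀ : Matrix (Fin n) (Fin n) ℝ := U * diagonal e * Uᵀ with hA₀_def
  have hA₀psd : A₀.PosSemidef := by
    have := (posSemidef_diagonal_iff.mpr (fun i => (he_pos i).le)).mul_mul_conjTranspose_same U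
    simpa [hA₀_def, mul_assoc] using this
  -- determinant of A₀
  have hprodμ : ∏ i, μ i = d := by
    have := hH.det_eq_prod_eigenvalues
    simp only [RCLike.ofReal_real_eq_id, id] at this
    exact this.symm
  have hcpow : c ^ (2 * n) = d := by
    rw [pow_mul, hc2, ← Real.rpow_natCast (d ^ ((1 : ℝ) / n)) n, ← Real.rpow_mul hd.le]
    rw [one_div, inv_mul_cancel₀ (by exact_mod_cast hn.ne' : (n : ℝ) ≠ 0), Real.rpow_one]
  have hdetD : (diagonal e).det = 1 := by
    rw [det_diagonal]
    have hpos : 0 < ∏ i, e i := Finset.prod_pos (fun i _ => he_pos i)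
    have hsq : (∏ i, e i) ^ 2 = 1 := by
      rw [← Finset.prod_pow]
      have : ∀ i ∈ Finset.univ, e i ^ 2 = c ^ 2 / μ i := by
        intro i _
        rw [he_def]
        rw [div_pow, Real.sq_sqrt (hμpos i).le]
      rw [Finset.prod_congr rfl this, Finset.prod_div_distrib, Finset.prod_const, hprodμ]
      rw [Finset.card_univ, Fintype.card_fin, ← pow_mul, hcpow]
      field_simp
    nlinarith
  have hdetU : U.det * Uᵀ.det = 1 := by rw [← det_mul, hUU', det_one]
  have hA₀det : A₀.det = 1 := by
    rw [hA₀_def, det_mul, det_mul, hdetD, mul_one, hdetU]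
  have hA₀ : A₀.PosDef := posDef_of_posSemidef_det_ne_zero hA₀psd (by rw [hA₀det]; norm_num)
  -- trace value
  have hA₀sym : A₀ᵀ = A₀ := hA₀psd.1
  have cancel : ∀ X : Matrix (Fin n) (Fin n) ℝ, Uᵀ * (U * X) = X := fun X => by
    rw [← mul_assoc, hUU, one_mul]
  have hf : ∀ i, e i * (μ i * e i) = c ^ 2 := by
    intro i
    have hs : (0 : ℝ) < Real.sqrt (μ i) := Real.sqrt_pos.mpr (hμpos i)
    have h1 : Real.sqrt (μ i) * Real.sqrt (μ i) = μ i := Real.mul_self_sqrt (hμpos i).le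
    show c / Real.sqrt (μ i) * (μ i * (c / Real.sqrt (μ i))) = c ^ 2
    set s : ℝ := Real.sqrt (μ i) with hs_def
    rw [← h1]
    field_simp
  have hkey : A₀ᵀ * M * A₀ = (c ^ 2) • (1 : Matrix (Fin n) (Fin n) ℝ) := by
    rw [hA₀sym, hA₀_def, hspec]
    simp only [mul_assoc]
    rw [cancel, cancel, ← mul_assoc (diagonal μ), diagonal_mul_diagonal,
      ← mul_assoc (diagonal e), diagonal_mul_diagonal]
    have hfe : (fun i => e i * (μ i * e i)) = fun _ => c ^ 2 := funext hf
    rw [hfe, ← smul_one_eq_diagonal, Matrix.smul_mul, one_mul, Matrix.mul_smul, hUU']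
  have htrace : (A₀ᵀ * M * A₀).trace = (n : ℝ) * d ^ ((1 : ℝ) / n) := by
    rw [hkey, trace_smul, trace_one]
    simp [hc2, mul_comm]
  -- the bound θ • 1 - A₀ is psd
  have hbound : (θ • (1 : Matrix (Fin n) (Fin n) ℝ) - A₀).PosSemidef := by
    have hrw : θ • (1 : Matrix (Fin n) (Fin n) ℝ) - A₀
        = U * diagonal (fun i => θ - e i) * Uᵀ := by
      have h1 : θ • (1 : Matrix (Fin n) (Fin n) ℝ) = U * (θ • (1 : Matrix (Fin n) (Fin n) ℝ)) * Uᵀ := by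
        rw [Matrix.mul_smul, Matrix.smul_mul, mul_one, hUU']
      rw [h1, hA₀_def, ← Matrix.sub_mul, ← Matrix.mul_sub]
      congr 1
      congr 1
      rw [smul_one_eq_diagonal, diagonal_sub]
    rw [hrw]
    have hnn : ∀ i, 0 ≤ θ - e i := by
      intro i
      have hθ0 : Real.sqrt (d ^ ((1 : ℝ) / n) / lmin) = c / Real.sqrt lmin := by
        rw [Real.sqrt_div hdr.le]
      have h1 : e i ≤ c / Real.sqrt lmin :=
        div_le_div_of_nonneg_left hc.le (Real.sqrt_pos.mpr hlmin_pos)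
          (Real.sqrt_le_sqrt (hlμ i))
      have h2 : e i < θ := lt_of_le_of_lt h1 (hθ0 ▸ hθ)
      linarith
    exact (posSemidef_diagonal_iff.mpr hnn).mul_mul_conjTranspose_same U
  -- lower bound value
  set m : ℝ := (n : ℝ) * d ^ ((1 : ℝ) / n) with hm_def
  set S₁ : Set ℝ := {x : ℝ | ∃ A : Matrix (Fin n) (Fin n) ℝ, A.det = 1 ∧ x = (Aᵀ * M * A).trace}
    with hS₁
  set S₂ : Set ℝ := {x : ℝ | ∃ A : Matrix (Fin n) (Fin n) ℝ, A.PosDef ∧ A.det = 1 ∧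
      (θ • (1 : Matrix (Fin n) (Fin n) ℝ) - A).PosSemidef ∧ x = (Aᵀ * M * A).trace} with hS₂
  have hsub : S₂ ⊆ S₁ := by
    rintro x ⟨A, _, h2, _, h4⟩
    exact ⟨A, h2, h4⟩
  have hmem : m ∈ S₂ := ⟨A₀, hA₀, hA₀det, hbound, htrace.symm⟩
  have hlb : ∀ x ∈ S₁, m ≤ x := by
    rintro x ⟨A, hAdet, rfl⟩
    exact trace_lower_bound hn hM hAdet
  have hbdd : BddBelow S₁ := ⟨m, hlb⟩
  apply le_antisymm
  · exact csInf_le_csInf hbdd ⟨m, hmem⟩ hsub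
  · calc sInf S₂ ≤ m := csInf_le (hbdd.mono hsub) hmem
      _ ≤ sInf S₁ := le_csInf ⟨m, hsub hmem⟩ hlb
end

section
/- Let M be a symmetric positive semidefinite n×n real matrix with det M = 0. Then for every δ > 0 there exists a real n×n matrix A₀ with det A₀ = 1 such that trace(A₀ᵀ M A₀) < δ. -/
open Matrix

/-- For symmetric positive semidefinite `M` with `det M = 0`, for every `δ > 0`
there is `A₀` with `det A₀ = 1` and `trace(A₀ᵀ M A₀) < δ`. -/
theorem exists_small_trace_of_det_zero (n : ℕ) (M : Matrix (Fin n) (Fin n) ℝ)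
    (hM : M.PosSemidef) (hdet : M.det = 0) :
    ∀ δ > (0 : ℝ), ∃ A₀ : Matrix (Fin n) (Fin n) ℝ, A₀.det = 1 ∧ (A₀ᵀ * M * A₀).trace < δ := by
  intro δ hδ
  have hH : M.IsHermitian := hM.isHermitian
  set lam : Fin n → ℝ := hH.eigenvalues with hlam
  have hnn : ∀ k, 0 ≤ lam k := fun k => hM.eigenvalues_nonneg k
  set B : Matrix (Fin n) (Fin n) ℝ := (hH.eigenvectorUnitary : Matrix (Fin n) (Fin n) ℝ) with hB
  have hdiag : Bᵀ * M * B = diagonal lam := by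
    have := hH.conjStarAlgAut_star_eigenvectorUnitary
    rw [Unitary.conjStarAlgAut_star_apply] at this
    simpa [Matrix.star_eq_conjTranspose, Matrix.conjTranspose_eq_transpose_of_trivial,
      Function.comp] using this
  have hBdet : B.det ≠ 0 := by
    have h1 : Bᵀ * B = 1 := by
      have := Unitary.coe_star_mul_self hH.eigenvectorUnitary
      simpa [Matrix.star_eq_conjTranspose, Matrix.conjTranspose_eq_transpose_of_trivial] using this
    have := congrArg Matrix.det h1
    simp [Matrix.det_mul] at this
    intro h; rw [h] at this; simp at this
  -- some eigenvalue is zero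
  have hprod : ∏ k, lam k = 0 := by
    have := hH.det_eq_prod_eigenvalues
    rw [hdet] at this
    exact_mod_cast this.symm
  obtain ⟨i, -, hi⟩ := Finset.prod_eq_zero_iff.mp hprod
  set S : ℝ := ∑ k, lam k with hS
  have hSnn : 0 ≤ S := Finset.sum_nonneg fun k _ => hnn k
  set ε : ℝ := Real.sqrt (δ / (S + 1)) with hε
  have hεpos : 0 < ε := Real.sqrt_pos.mpr (div_pos hδ (by linarith))
  have hε2 : ε ^ 2 = δ / (S + 1) := Real.sq_sqrt (le_of_lt (div_pos hδ (by linarith)))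
  set d : Fin n → ℝ := fun k => if k = i then (B.det * ε ^ (n - 1))⁻¹ else ε with hd
  refine ⟨B * diagonal d, ?_, ?_⟩
  · rw [Matrix.det_mul, Matrix.det_diagonal,
      ← Finset.mul_prod_erase Finset.univ d (Finset.mem_univ i)]
    have h1 : d i = (B.det * ε ^ (n - 1))⁻¹ := by simp [hd]
    have h2 : ∏ k ∈ Finset.univ.erase i, d k = ε ^ (n - 1) := by
      rw [Finset.prod_congr rfl (fun k hk => ?_), Finset.prod_const,
        Finset.card_erase_of_mem (Finset.mem_univ i), Finset.card_univ, Fintype.card_fin]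
      simp [hd, Finset.ne_of_mem_erase hk]
    rw [h1, h2]
    field_simp
  · have hA : (B * diagonal d)ᵀ * M * (B * diagonal d)
        = diagonal (fun k => d k * lam k * d k) := by
      rw [Matrix.transpose_mul, Matrix.diagonal_transpose]
      calc diagonal d * Bᵀ * M * (B * diagonal d)
          = diagonal d * (Bᵀ * M * B) * diagonal d := by simp only [Matrix.mul_assoc]
        _ = diagonal d * diagonal lam * diagonal d := by rw [hdiag]
        _ = diagonal (fun k => d k * lam k * d k) := by
            rw [Matrix.diagonal_mul_diagonal, Matrix.diagonal_mul_diagonal]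
    rw [hA, Matrix.trace_diagonal]
    have heq : ∀ k, d k * lam k * d k ≤ ε ^ 2 * lam k := by
      intro k
      by_cases hk : k = i
      · subst hk; rw [hi]; simp [mul_nonneg, sq_nonneg, hnn]
      · simp only [hd, if_neg hk]; ring_nf; rfl
    calc ∑ k, d k * lam k * d k ≤ ∑ k, ε ^ 2 * lam k :=
          Finset.sum_le_sum fun k _ => heq k
      _ = ε ^ 2 * S := by rw [← Finset.mul_sum]
      _ = δ / (S + 1) * S := by rw [hε2]
      _ < δ := by rw [div_mul_eq_mul_div, div_lt_iff₀ (by linarith)]; nlinarith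
end

section
/- Let φ: (0,∞) → (0,∞) satisfy φ(ε) → ∞ as ε → 0. Let M be a symmetric positive definite n×n real matrix. Then the doubly-indexed family I(ε,η) := inf{ trace(Aᵀ(M ± ηI)A) : A symmetric positive definite, det A = 1, A ≤ φ(ε)I } converges to n (det M)^{1/n} as (ε, η) → (0, 0). -/
open Matrix Filter

section Helpers

variable {n : ℕ}

lemma myTrace {B : Matrix (Fin n) (Fin n) ℝ} (hB : B.IsHermitian) :
    B.trace = ∑ i, hB.eigenvalues i := by
  conv_lhs => rw [hB.spectral_theorem]
  rw [Unitary.conjStarAlgAut_apply]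
  rw [Matrix.trace_mul_cycle]
  simp [Matrix.trace_diagonal, Unitary.coe_star_mul_self]

lemma myAMGM (hn : 0 < n) {B : Matrix (Fin n) (Fin n) ℝ} (hB : B.PosDef) :
    (n : ℝ) * B.det ^ ((1:ℝ)/n) ≤ B.trace := by
  have hev := hB.eigenvalues_pos
  have hdet : B.det = ∏ i, hB.isHermitian.eigenvalues i := by
    simpa using hB.isHermitian.det_eq_prod_eigenvalues
  have key := Real.geom_mean_le_arith_mean_weighted Finset.univ (fun _ => (1:ℝ)/n)
    hB.isHermitian.eigenvalues (fun i _ => by positivity)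
    (by simp [Finset.card_univ]; field_simp) (fun i _ => (hev i).le)
  rw [Real.finset_prod_rpow _ _ (fun i _ => (hev i).le)] at key
  rw [myTrace hB.isHermitian, hdet]
  have hn' : (0:ℝ) < n := by exact_mod_cast hn
  calc (n : ℝ) * (∏ i, hB.isHermitian.eigenvalues i) ^ ((1:ℝ)/n)
      ≤ (n : ℝ) * ∑ i, (1/n) * hB.isHermitian.eigenvalues i := by
        exact mul_le_mul_of_nonneg_left key hn'.le
    _ = ∑ i, hB.isHermitian.eigenvalues i := by
        rw [Finset.mul_sum]; field_simp

lemma posDef_conj {B P : Matrix (Fin n) (Fin n) ℝ} (hP : P.PosDef)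
    (hB : IsUnit B) : (B * P * Bᴴ).PosDef := by
  refine Matrix.PosDef.of_dotProduct_mulVec_pos ?_ (fun x hx => ?_)
  · show (B * P * Bᴴ)ᴴ = _
    simp only [Matrix.conjTranspose_mul, Matrix.conjTranspose_conjTranspose, hP.isHermitian.eq,
      Matrix.mul_assoc]
  · have hBH : IsUnit Bᴴ := by
      rw [Matrix.isUnit_iff_isUnit_det] at hB ⊢
      simpa using hB
    have hy : Bᴴ *ᵥ x ≠ 0 := by
      intro h
      exact hx (Matrix.mulVec_injective_iff_isUnit.mpr hBH (h.trans (Matrix.mulVec_zero Bᴴ).symm))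
    have key : dotProduct (star x) ((B * P * Bᴴ) *ᵥ x)
        = dotProduct (star (Bᴴ *ᵥ x)) (P *ᵥ (Bᴴ *ᵥ x)) := by
      rw [Matrix.star_mulVec, ← Matrix.mulVec_mulVec, ← Matrix.mulVec_mulVec,
        Matrix.dotProduct_mulVec (star x), Matrix.conjTranspose_conjTranspose]
    rw [key]
    exact hP.dotProduct_mulVec_pos hy

lemma unit_dot {N : Matrix (Fin n) (Fin n) ℝ} (hN : N.IsHermitian) (i : Fin n) :
    dotProduct (star ⇑(hN.eigenvectorBasis i)) ⇑(hN.eigenvectorBasis i) = 1 := by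
  have h := orthonormal_iff_ite.mp hN.eigenvectorBasis.orthonormal i i
  rw [EuclideanSpace.inner_eq_star_dotProduct] at h
  simpa using h

lemma le_eigs_of_psd {N : Matrix (Fin n) (Fin n) ℝ} (hN : N.IsHermitian) {a : ℝ}
    (h : (N - a • 1).PosSemidef) (i : Fin n) : a ≤ hN.eigenvalues i := by
  have h2 := h.dotProduct_mulVec_nonneg ⇑(hN.eigenvectorBasis i)
  rw [Matrix.sub_mulVec, Matrix.smul_mulVec, Matrix.one_mulVec,
    hN.mulVec_eigenvectorBasis, dotProduct_sub, dotProduct_smul, dotProduct_smul,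
    unit_dot hN i] at h2
  simpa using h2

lemma psd_of_le_eigs {N : Matrix (Fin n) (Fin n) ℝ} (hN : N.IsHermitian) {a : ℝ}
    (h : ∀ i, a ≤ hN.eigenvalues i) : (N - a • 1).PosSemidef := by
  have hsp := hN.spectral_theorem
  have hone : (hN.eigenvectorUnitary : Matrix (Fin n) (Fin n) ℝ) *
      (star hN.eigenvectorUnitary : Matrix (Fin n) (Fin n) ℝ) = 1 :=
    (Matrix.mem_unitaryGroup_iff).mp hN.eigenvectorUnitary.2
  have h2 : (hN.eigenvectorUnitary : Matrix (Fin n) (Fin n) ℝ) *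
      (a • (1 : Matrix (Fin n) (Fin n) ℝ)) *
      (star hN.eigenvectorUnitary : Matrix (Fin n) (Fin n) ℝ) = a • 1 := by
    rw [Matrix.mul_smul, Matrix.smul_mul, Matrix.mul_one, hone]
  have h3 : diagonal (fun i => hN.eigenvalues i - a) =
      diagonal (RCLike.ofReal ∘ hN.eigenvalues) - a • (1 : Matrix (Fin n) (Fin n) ℝ) := by
    rw [Matrix.smul_one_eq_diagonal, Matrix.diagonal_sub]
    rfl
  have key : N - a • 1 = (hN.eigenvectorUnitary : Matrix (Fin n) (Fin n) ℝ) *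
      diagonal (fun i => hN.eigenvalues i - a) *
      (star hN.eigenvectorUnitary : Matrix (Fin n) (Fin n) ℝ) := by
    conv_lhs => rw [hsp]
    rw [Unitary.conjStarAlgAut_apply]
    rw [h3, Matrix.mul_sub, Matrix.sub_mul, h2]
  rw [key]
  exact (Matrix.PosSemidef.diagonal (fun i => by simpa using h i)).mul_mul_conjTranspose_same _

lemma sInf_formula (hn : 0 < n) {N : Matrix (Fin n) (Fin n) ℝ} (hN : N.PosDef) {c : ℝ}
    (hc : ∀ i, N.det ^ ((1:ℝ)/(2*n)) * (hN.isHermitian.eigenvalues i) ^ (-(1/2) : ℝ) ≤ c) :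
    sInf {x : ℝ | ∃ A : Matrix (Fin n) (Fin n) ℝ, A.PosDef ∧ A.det = 1 ∧
        (c • (1 : Matrix (Fin n) (Fin n) ℝ) - A).PosSemidef ∧ x = (Aᵀ * N * A).trace}
      = n * N.det ^ ((1:ℝ)/n) := by
  have hdetpos : 0 < N.det := hN.det_pos
  have hnR : (0:ℝ) < n := by exact_mod_cast hn
  -- lower bound
  have hlb : ∀ x ∈ {x : ℝ | ∃ A : Matrix (Fin n) (Fin n) ℝ, A.PosDef ∧ A.det = 1 ∧
      (c • (1 : Matrix (Fin n) (Fin n) ℝ) - A).PosSemidef ∧ x = (Aᵀ * N * A).trace},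
      (n : ℝ) * N.det ^ ((1:ℝ)/n) ≤ x := by
    rintro x ⟨A, hA, hdet, -, rfl⟩
    have hAT : Aᵀ = A := by
      rw [← Matrix.conjTranspose_eq_transpose_of_trivial, hA.isHermitian.eq]
    have hAH : Aᴴ = A := by
      rw [Matrix.conjTranspose_eq_transpose_of_trivial, hAT]
    have hAU : IsUnit A := by
      rw [Matrix.isUnit_iff_isUnit_det, hdet]; exact isUnit_one
    have hB : (A * N * Aᴴ).PosDef := posDef_conj hN hAU
    have hdB : (A * N * Aᴴ).det = N.det := by
      rw [Matrix.det_mul, Matrix.det_mul, Matrix.det_conjTranspose, hdet]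
      simp
    have := myAMGM hn hB
    rw [hdB] at this
    simpa [hAT, hAH] using this
  -- the optimizer
  set U : Matrix (Fin n) (Fin n) ℝ := (hN.isHermitian.eigenvectorUnitary : Matrix (Fin n) (Fin n) ℝ) with hU
  set lam : Fin n → ℝ := hN.isHermitian.eigenvalues with hlam
  have hlampos : ∀ i, 0 < lam i := hN.eigenvalues_pos
  have hone : U * star U = 1 := (Matrix.mem_unitaryGroup_iff).mp hN.isHermitian.eigenvectorUnitary.2
  have hone' : star U * U = 1 :=
    (Matrix.mem_unitaryGroup_iff').mp hN.isHermitian.eigenvectorUnitary.2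
  have hUunit : IsUnit U := by
    rw [Matrix.isUnit_iff_isUnit_det]
    exact IsUnit.of_mul_eq_one _ (by rw [← Matrix.det_mul, hone, Matrix.det_one])
  set c₀ : ℝ := N.det ^ ((1:ℝ)/(2*n)) with hc₀
  have hc₀pos : 0 < c₀ := Real.rpow_pos_of_pos hdetpos _
  set d : Fin n → ℝ := fun i => c₀ * (lam i) ^ (-(1/2) : ℝ) with hd
  have hdpos : ∀ i, 0 < d i := fun i =>
    mul_pos hc₀pos (Real.rpow_pos_of_pos (hlampos i) _)
  set A₀ : Matrix (Fin n) (Fin n) ℝ := U * diagonal d * star U with hA₀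
  have hsp : N = U * diagonal (RCLike.ofReal ∘ lam) * star U := hN.isHermitian.spectral_theorem
  have hA₀pd : A₀.PosDef := by
    have h := posDef_conj (Matrix.PosDef.diagonal hdpos) hUunit
    rwa [← Matrix.star_eq_conjTranspose, ← hA₀] at h
  have hA₀det : A₀.det = 1 := by
    rw [hA₀, Matrix.det_mul, Matrix.det_mul, mul_comm, ← mul_assoc, ← Matrix.det_mul, hone',
      Matrix.det_one, one_mul, Matrix.det_diagonal]
    have : ∏ i, d i = c₀ ^ (n:ℕ) * (∏ i, lam i) ^ (-(1/2) : ℝ) := by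
      rw [Finset.prod_mul_distrib, Finset.prod_const, Finset.card_univ, Fintype.card_fin,
        Real.finset_prod_rpow _ _ (fun i _ => (hlampos i).le)]
    rw [this]
    have hprod : ∏ i, lam i = N.det := by
      simpa using hN.isHermitian.det_eq_prod_eigenvalues.symm
    rw [hprod, ← Real.rpow_natCast c₀ n, hc₀, ← Real.rpow_mul hdetpos.le, ← Real.rpow_add hdetpos]
    rw [show (1:ℝ)/(2*n) * n + (-(1/2)) = 0 by field_simp; ring, Real.rpow_zero]
  have hfeas : (c • (1 : Matrix (Fin n) (Fin n) ℝ) - A₀).PosSemidef := by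
    have h2 : U * (c • (1 : Matrix (Fin n) (Fin n) ℝ)) * star U = c • 1 := by
      rw [Matrix.mul_smul, Matrix.smul_mul, Matrix.mul_one, hone]
    have h3 : diagonal (fun i => c - d i) =
        c • (1 : Matrix (Fin n) (Fin n) ℝ) - diagonal d := by
      rw [Matrix.smul_one_eq_diagonal, Matrix.diagonal_sub]
    have key : c • (1 : Matrix (Fin n) (Fin n) ℝ) - A₀ =
        U * diagonal (fun i => c - d i) * star U := by
      rw [h3, Matrix.mul_sub, Matrix.sub_mul, h2, hA₀]
    rw [key]
    exact (Matrix.PosSemidef.diagonal (fun i => sub_nonneg.mpr (hc i))).mul_mul_conjTranspose_same _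
  have hval : (A₀ᵀ * N * A₀).trace = n * N.det ^ ((1:ℝ)/n) := by
    have hA₀T : A₀ᵀ = A₀ := by
      rw [← Matrix.conjTranspose_eq_transpose_of_trivial, hA₀pd.isHermitian.eq]
    have hmul : A₀ * N * A₀ = U * diagonal (fun i => d i * lam i * d i) * star U := by
      rw [hA₀, hsp]
      have : RCLike.ofReal ∘ lam = lam := rfl
      rw [this]
      calc U * diagonal d * star U * (U * diagonal lam * star U) * (U * diagonal d * star U)
          = U * (diagonal d * (star U * U) * diagonal lam * (star U * U) * diagonal d) * star U :=
            by noncomm_ring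
        _ = U * (diagonal d * diagonal lam * diagonal d) * star U := by
            rw [hone', Matrix.mul_one, Matrix.mul_one]
        _ = _ := by
            rw [Matrix.diagonal_mul_diagonal, Matrix.diagonal_mul_diagonal]
    have hterm : ∀ i, d i * lam i * d i = c₀ ^ (2:ℕ) := by
      intro i
      have h1 : (lam i) ^ (-(1/2) : ℝ) * (lam i) ^ (-(1/2) : ℝ) = (lam i)⁻¹ := by
        rw [← Real.rpow_add (hlampos i), show -(1/2 : ℝ) + -(1/2) = -1 by norm_num,
          Real.rpow_neg_one]
      calc d i * lam i * d i = c₀ ^ (2:ℕ) * ((lam i) ^ (-(1/2) : ℝ) * (lam i) ^ (-(1/2) : ℝ) * lam i) := by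
            rw [hd]; ring
        _ = c₀ ^ (2:ℕ) := by rw [h1, inv_mul_cancel₀ (hlampos i).ne']; ring
    have hc₀sq : c₀ ^ (2:ℕ) = N.det ^ ((1:ℝ)/n) := by
      rw [hc₀, ← Real.rpow_natCast _ 2, ← Real.rpow_mul hdetpos.le]
      congr 1
      field_simp
      norm_num
    rw [hA₀T, hmul, Matrix.trace_mul_cycle, hone', Matrix.one_mul,
      Matrix.trace_diagonal]
    simp only [hterm, hc₀sq, Finset.sum_const, Finset.card_univ, Fintype.card_fin, nsmul_eq_mul]
  -- conclude
  have hmem : (n : ℝ) * N.det ^ ((1:ℝ)/n) ∈ {x : ℝ | ∃ A : Matrix (Fin n) (Fin n) ℝ, A.PosDef ∧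
      A.det = 1 ∧ (c • (1 : Matrix (Fin n) (Fin n) ℝ) - A).PosSemidef ∧
      x = (Aᵀ * N * A).trace} := ⟨A₀, hA₀pd, hA₀det, hfeas, hval.symm⟩
  exact le_antisymm (csInf_le ⟨_, hlb⟩ hmem) (le_csInf ⟨_, hmem⟩ hlb)

lemma main_aux (hn : 0 < n) (φ : ℝ → ℝ)
    (hφ : Tendsto φ (nhdsWithin 0 (Set.Ioi 0)) atTop)
    (M : Matrix (Fin n) (Fin n) ℝ) (hM : M.PosDef) (σ : ℝ) (hσ : σ = 1 ∨ σ = -1) :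
    Tendsto (fun p : ℝ × ℝ =>
        sInf {x : ℝ | ∃ A : Matrix (Fin n) (Fin n) ℝ, A.PosDef ∧ A.det = 1 ∧
          (φ p.1 • (1 : Matrix (Fin n) (Fin n) ℝ) - A).PosSemidef ∧
          x = (Aᵀ * (M + (σ * p.2) • (1 : Matrix (Fin n) (Fin n) ℝ)) * A).trace})
      ((nhdsWithin 0 (Set.Ioi 0)) ×ˢ (nhdsWithin 0 (Set.Ioi 0)))
      (nhds (n * M.det ^ ((1 : ℝ) / n))) := by
  have hnR : (0:ℝ) < n := by exact_mod_cast hn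
  have : Nonempty (Fin n) := ⟨⟨0, hn⟩⟩
  set lam := hM.isHermitian.eigenvalues with hlam
  have hlampos : ∀ i, 0 < lam i := hM.eigenvalues_pos
  set a : ℝ := Finset.univ.inf' Finset.univ_nonempty lam with ha
  have hapos : 0 < a := by
    rw [ha, Finset.lt_inf'_iff]
    exact fun i _ => hlampos i
  have hMa : (M - a • 1).PosSemidef :=
    psd_of_le_eigs hM.isHermitian (fun i => Finset.inf'_le _ (Finset.mem_univ i))
  set b : ℝ := a / 2 with hb
  have hbpos : 0 < b := by positivity
  set T : ℝ := M.trace + n with hT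
  have htrM : 0 ≤ M.trace := by
    rw [myTrace hM.isHermitian]
    exact Finset.sum_nonneg fun i _ => (hlampos i).le
  have hTpos : 0 < T := by positivity
  set C : ℝ := (T / n) ^ ((1:ℝ)/2) * b ^ (-(1/2) : ℝ) with hC
  set δ : ℝ := min 1 b with hδ
  have hδpos : 0 < δ := lt_min one_pos hbpos
  -- the key uniform formula
  have key : ∀ p : ℝ × ℝ, C ≤ φ p.1 → p.2 ∈ Set.Ioc 0 δ →
      sInf {x : ℝ | ∃ A : Matrix (Fin n) (Fin n) ℝ, A.PosDef ∧ A.det = 1 ∧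
          (φ p.1 • (1 : Matrix (Fin n) (Fin n) ℝ) - A).PosSemidef ∧
          x = (Aᵀ * (M + (σ * p.2) • (1 : Matrix (Fin n) (Fin n) ℝ)) * A).trace}
        = n * (M + (σ * p.2) • (1 : Matrix (Fin n) (Fin n) ℝ)).det ^ ((1:ℝ)/n) := by
    rintro ⟨ε, η⟩ hφε ⟨hη0, hηδ⟩
    set N : Matrix (Fin n) (Fin n) ℝ := M + (σ * η) • 1 with hNdef
    have hη1 : η ≤ 1 := le_trans hηδ (min_le_left 1 b)
    have hηb : η ≤ b := le_trans hηδ (min_le_right 1 b)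
    have hη0' : (0:ℝ) < η := hη0
    have hση_le : σ * η ≤ 1 := by
      rcases hσ with h | h <;> rw [h] <;> linarith
    have hση_ge : -b ≤ σ * η := by
      rcases hσ with h | h <;> rw [h] <;> linarith
    have hNb : (N - b • 1).PosSemidef := by
      have heq : N - b • 1 = (M - a • 1) + ((σ * η) + (a - b)) • 1 := by
        rw [hNdef]
        have hab : a - b = b := by rw [hb]; ring
        module
      rw [heq]
      refine hMa.add ?_
      rw [Matrix.smul_one_eq_diagonal]
      refine Matrix.PosSemidef.diagonal fun i => ?_
      have hab : a - b = b := by rw [hb]; ring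
      simp only [Pi.zero_apply]
      linarith
    have hN : N.PosDef := by
      have heq : N = (b • (1 : Matrix (Fin n) (Fin n) ℝ)) + (N - b • 1) := by module
      rw [heq]
      refine Matrix.PosDef.add_posSemidef ?_ hNb
      rw [Matrix.smul_one_eq_diagonal]
      exact Matrix.PosDef.diagonal fun i => hbpos
    have htrN : N.trace ≤ T := by
      rw [hNdef, Matrix.trace_add, Matrix.trace_smul, Matrix.trace_one, hT]
      simp only [smul_eq_mul, Fintype.card_fin]
      have : σ * η * n ≤ 1 * n := by
        apply mul_le_mul_of_nonneg_right hση_le hnR.le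
      linarith
    have hdet_le : N.det ^ ((1:ℝ)/n) ≤ T / n := by
      rw [le_div_iff₀ hnR]
      have := myAMGM hn hN
      linarith [htrN, mul_comm (N.det ^ ((1:ℝ)/n)) (n:ℝ)]
    have hc : ∀ i, N.det ^ ((1:ℝ)/(2*n)) * (hN.isHermitian.eigenvalues i) ^ (-(1/2) : ℝ) ≤ φ ε := by
      intro i
      refine le_trans ?_ hφε
      have heig : b ≤ hN.isHermitian.eigenvalues i := le_eigs_of_psd hN.isHermitian hNb i
      have h1 : N.det ^ ((1:ℝ)/(2*n)) ≤ (T / n) ^ ((1:ℝ)/2) := by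
        have : (1:ℝ)/(2*n) = (1/n) * (1/2) := by field_simp
        rw [this, Real.rpow_mul hN.det_pos.le]
        exact Real.rpow_le_rpow (Real.rpow_nonneg hN.det_pos.le _) hdet_le (by norm_num)
      have h2 : (hN.isHermitian.eigenvalues i) ^ (-(1/2) : ℝ) ≤ b ^ (-(1/2) : ℝ) :=
        Real.rpow_le_rpow_of_nonpos hbpos heig (by norm_num)
      rw [hC]
      exact mul_le_mul h1 h2 (Real.rpow_nonneg (hN.eigenvalues_pos i).le _)
        (Real.rpow_nonneg (div_nonneg hTpos.le hnR.le) _)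
    exact sInf_formula hn hN hc
  -- the limit of the formula
  have hg : Tendsto (fun η : ℝ => (n : ℝ) *
      (M + (σ * η) • (1 : Matrix (Fin n) (Fin n) ℝ)).det ^ ((1:ℝ)/n))
      (nhdsWithin 0 (Set.Ioi 0)) (nhds (n * M.det ^ ((1:ℝ)/n))) := by
    have hcont : Continuous fun η : ℝ => (M + (σ * η) • (1 : Matrix (Fin n) (Fin n) ℝ)).det := by
      apply Continuous.matrix_det
      exact continuous_const.add ((continuous_const.mul continuous_id).smul continuous_const)
    have h1 : Tendsto (fun η : ℝ => (M + (σ * η) • (1 : Matrix (Fin n) (Fin n) ℝ)).det)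
        (nhdsWithin 0 (Set.Ioi 0)) (nhds M.det) := by
      have := hcont.tendsto 0
      simp only [mul_zero, zero_smul, add_zero] at this
      exact this.mono_left nhdsWithin_le_nhds
    have h2 : ContinuousAt (fun x : ℝ => x ^ ((1:ℝ)/n)) M.det :=
      Real.continuousAt_rpow_const _ _ (Or.inl hM.det_pos.ne')
    exact (tendsto_const_nhds.mul (h2.tendsto.comp h1))
  -- conclude by eventual equality
  have hev : ∀ᶠ p : ℝ × ℝ in (nhdsWithin 0 (Set.Ioi 0)) ×ˢ (nhdsWithin 0 (Set.Ioi 0)),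
      C ≤ φ p.1 ∧ p.2 ∈ Set.Ioc 0 δ :=
    Filter.Eventually.prod_mk (hφ.eventually_ge_atTop C)
      (eventually_mem_set.mpr (Ioc_mem_nhdsGT hδpos))
  refine Tendsto.congr' ?_ (hg.comp tendsto_snd)
  exact hev.mono fun p hp => (key p hp.1 hp.2).symm

end Helpers

/-- For symmetric positive definite `M` and `φ(ε) → ∞` as `ε → 0⁺`, the constrained infima
`inf { trace(Aᵀ(M ± ηI)A) : A pos. def., det A = 1, A ≤ φ(ε)I }` converge to
`n (det M)^{1/n}` as `(ε, η) → (0, 0)` with `ε, η > 0`. -/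
theorem constrained_inf_tendsto_posDef (n : ℕ) (hn : 0 < n) (φ : ℝ → ℝ)
    (hφ : Tendsto φ (nhdsWithin 0 (Set.Ioi 0)) atTop)
    (M : Matrix (Fin n) (Fin n) ℝ) (hM : M.PosDef) :
    Tendsto (fun p : ℝ × ℝ =>
        sInf {x : ℝ | ∃ A : Matrix (Fin n) (Fin n) ℝ, A.PosDef ∧ A.det = 1 ∧
          (φ p.1 • (1 : Matrix (Fin n) (Fin n) ℝ) - A).PosSemidef ∧
          x = (Aᵀ * (M + p.2 • (1 : Matrix (Fin n) (Fin n) ℝ)) * A).trace})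
      ((nhdsWithin 0 (Set.Ioi 0)) ×ˢ (nhdsWithin 0 (Set.Ioi 0)))
      (nhds (n * M.det ^ ((1 : ℝ) / n)))
    ∧
    Tendsto (fun p : ℝ × ℝ =>
        sInf {x : ℝ | ∃ A : Matrix (Fin n) (Fin n) ℝ, A.PosDef ∧ A.det = 1 ∧
          (φ p.1 • (1 : Matrix (Fin n) (Fin n) ℝ) - A).PosSemidef ∧
          x = (Aᵀ * (M - p.2 • (1 : Matrix (Fin n) (Fin n) ℝ)) * A).trace})
      ((nhdsWithin 0 (Set.Ioi 0)) ×ˢ (nhdsWithin 0 (Set.Ioi 0)))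
      (nhds (n * M.det ^ ((1 : ℝ) / n))) := by
  constructor
  · have h := main_aux hn φ hφ M hM 1 (Or.inl rfl)
    simpa only [one_mul] using h
  · have h := main_aux hn φ hφ M hM (-1) (Or.inr rfl)
    simpa only [neg_mul, one_mul, neg_smul, ← sub_eq_add_neg] using h
end

section
/- Let φ: (0,∞) → (0,∞) satisfy φ(ε) → ∞ as ε → 0. Let M be a symmetric positive semidefinite n×n real matrix. Then inf{ trace(Aᵀ(M + ηI)A) : A symmetric positive definite, det A = 1, A ≤ φ(ε)I } converges to n (det M)^{1/n} as (ε, η) → (0, 0) with η > 0. -/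
open Matrix Filter


namespace ConstrainedAux

variable {n : ℕ} {A : Matrix (Fin n) (Fin n) ℝ}

lemma posDef_conj_mul {D B : Matrix (Fin n) (Fin n) ℝ}
    (hD : D.PosDef) (hB : IsUnit B) : (Bᴴ * D * B).PosDef := by
  refine Matrix.PosDef.of_dotProduct_mulVec_pos (Matrix.isHermitian_conjTranspose_mul_mul B hD.1) fun x hx => ?_
  have hinj := Matrix.mulVec_injective_iff_isUnit.mpr hB
  have hBx : B *ᵥ x ≠ 0 := by
    intro h
    exact hx (hinj (by simpa using h))
  simpa only [star_mulVec, dotProduct_mulVec, vecMul_vecMul] using hD.dotProduct_mulVec_pos hBx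

lemma trace_eq_sum_eigen {B : Matrix (Fin n) (Fin n) ℝ} (hB : B.IsHermitian) :
    B.trace = ∑ i, hB.eigenvalues i := by
  conv_lhs => rw [hB.spectral_theorem, Unitary.conjStarAlgAut_apply]
  rw [Matrix.trace_mul_cycle,
    (Matrix.mem_unitaryGroup_iff').mp (Matrix.IsHermitian.eigenvectorUnitary hB).2, one_mul,
    Matrix.trace_diagonal]
  simp

lemma amgm_trace (hn : 0 < n) {B : Matrix (Fin n) (Fin n) ℝ} (hB : B.PosSemidef) :
    (n : ℝ) * B.det ^ ((1 : ℝ) / n) ≤ B.trace := by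
  have hlam : ∀ i, 0 ≤ hB.1.eigenvalues i := hB.eigenvalues_nonneg
  have hn' : (0 : ℝ) < n := Nat.cast_pos.mpr hn
  have hdet : B.det = ∏ i, hB.1.eigenvalues i := by
    simpa using hB.1.det_eq_prod_eigenvalues
  have htr : B.trace = ∑ i, hB.1.eigenvalues i := trace_eq_sum_eigen hB.1
  have amgm := Real.geom_mean_le_arith_mean_weighted Finset.univ
      (fun _ => (1 : ℝ) / n) hB.1.eigenvalues (fun _ _ => by positivity)
      (by rw [Finset.sum_const, Finset.card_univ, Fintype.card_fin, nsmul_eq_mul]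
          field_simp) (fun i _ => hlam i)
  have h1 : B.det ^ ((1 : ℝ) / n) ≤ (1 / n) * B.trace := by
    rw [hdet, ← Real.finset_prod_rpow _ _ (fun i _ => hlam i), htr, Finset.mul_sum]
    exact amgm
  calc (n : ℝ) * B.det ^ ((1 : ℝ) / n) ≤ n * ((1 / n) * B.trace) :=
        mul_le_mul_of_nonneg_left h1 hn'.le
    _ = B.trace := by field_simp



/-- Conjugation of a diagonal matrix by the eigenvector unitary of `A`. -/
noncomputable def cj (hA : A.IsHermitian) (d : Fin n → ℝ) : Matrix (Fin n) (Fin n) ℝ :=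
  (Matrix.IsHermitian.eigenvectorUnitary hA : Matrix (Fin n) (Fin n) ℝ) * diagonal d *
    star (Matrix.IsHermitian.eigenvectorUnitary hA : Matrix (Fin n) (Fin n) ℝ)

lemma star_mul_self_cj (hA : A.IsHermitian) :
    star (Matrix.IsHermitian.eigenvectorUnitary hA : Matrix (Fin n) (Fin n) ℝ) *
      (Matrix.IsHermitian.eigenvectorUnitary hA : Matrix (Fin n) (Fin n) ℝ) = 1 :=
  (Matrix.mem_unitaryGroup_iff').mp (Matrix.IsHermitian.eigenvectorUnitary hA).2

lemma self_mul_star_cj (hA : A.IsHermitian) :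
    (Matrix.IsHermitian.eigenvectorUnitary hA : Matrix (Fin n) (Fin n) ℝ) *
      star (Matrix.IsHermitian.eigenvectorUnitary hA : Matrix (Fin n) (Fin n) ℝ) = 1 :=
  (Matrix.mem_unitaryGroup_iff).mp (Matrix.IsHermitian.eigenvectorUnitary hA).2

lemma cj_spectral (hA : A.IsHermitian) : A = cj hA hA.eigenvalues := by
  conv_lhs => rw [hA.spectral_theorem]
  unfold cj
  rw [RCLike.ofReal_real_eq_id, Function.id_comp]
  rw [Unitary.conjStarAlgAut_apply]

lemma cj_mul (hA : A.IsHermitian) (d e : Fin n → ℝ) :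
    cj hA d * cj hA e = cj hA (d * e) := by
  simp only [cj, Matrix.mul_assoc]
  rw [← Matrix.mul_assoc (star _), star_mul_self_cj hA, Matrix.one_mul,
    ← Matrix.mul_assoc (diagonal d), Matrix.diagonal_mul_diagonal]
  rfl

lemma cj_add (hA : A.IsHermitian) (d e : Fin n → ℝ) :
    cj hA d + cj hA e = cj hA (d + e) := by
  unfold cj
  conv_rhs => rw [show d + e = fun i => d i + e i from rfl, ← Matrix.diagonal_add,
    Matrix.mul_add, Matrix.add_mul]

lemma cj_const (hA : A.IsHermitian) (c : ℝ) :
    cj hA (fun _ => c) = c • (1 : Matrix (Fin n) (Fin n) ℝ) := by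
  unfold cj
  have : (diagonal (fun _ : Fin n => c) : Matrix (Fin n) (Fin n) ℝ) = c • 1 := by
    ext i j
    rcases eq_or_ne i j with h | h <;>
      simp [Matrix.diagonal_apply, Matrix.one_apply, h]
  rw [this, Matrix.mul_smul, Matrix.smul_mul, Matrix.mul_one, self_mul_star_cj hA]

lemma cj_trace (hA : A.IsHermitian) (d : Fin n → ℝ) :
    (cj hA d).trace = ∑ i, d i := by
  unfold cj
  rw [Matrix.trace_mul_cycle, star_mul_self_cj hA, Matrix.one_mul, Matrix.trace_diagonal]

lemma cj_det (hA : A.IsHermitian) (d : Fin n → ℝ) :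
    (cj hA d).det = ∏ i, d i := by
  have h : (cj hA d).det =
      ((Matrix.IsHermitian.eigenvectorUnitary hA : Matrix (Fin n) (Fin n) ℝ) *
        star (Matrix.IsHermitian.eigenvectorUnitary hA : Matrix (Fin n) (Fin n) ℝ)).det
        * (diagonal d).det := by
    unfold cj
    rw [Matrix.det_mul, Matrix.det_mul, Matrix.det_mul]
    ring
  rw [h, self_mul_star_cj hA, Matrix.det_one, one_mul, Matrix.det_diagonal]

lemma cj_transpose (hA : A.IsHermitian) (d : Fin n → ℝ) :
    (cj hA d)ᵀ = cj hA d := by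
  rw [← Matrix.conjTranspose_eq_transpose_of_trivial]
  unfold cj
  rw [Matrix.conjTranspose_mul, Matrix.conjTranspose_mul, Matrix.diagonal_conjTranspose,
    Matrix.star_eq_conjTranspose, Matrix.conjTranspose_conjTranspose]
  simp [Matrix.mul_assoc, Matrix.star_eq_conjTranspose]

lemma cj_posDef (hA : A.IsHermitian) {d : Fin n → ℝ} (hd : ∀ i, 0 < d i) :
    (cj hA d).PosDef := by
  have hU : IsUnit (star (Matrix.IsHermitian.eigenvectorUnitary hA :
      Matrix (Fin n) (Fin n) ℝ)) :=
    ⟨⟨star (Matrix.IsHermitian.eigenvectorUnitary hA : Matrix (Fin n) (Fin n) ℝ),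
      (Matrix.IsHermitian.eigenvectorUnitary hA : Matrix (Fin n) (Fin n) ℝ),
      star_mul_self_cj hA, self_mul_star_cj hA⟩, rfl⟩
  have h := posDef_conj_mul (Matrix.PosDef.diagonal hd) hU
  rw [← Matrix.star_eq_conjTranspose, star_star] at h
  exact h

lemma cj_posSemidef (hA : A.IsHermitian) {d : Fin n → ℝ} (hd : ∀ i, 0 ≤ d i) :
    (cj hA d).PosSemidef := by
  have := (Matrix.PosSemidef.diagonal (by intro i; exact hd i)).mul_mul_conjTranspose_same
    (Matrix.IsHermitian.eigenvectorUnitary hA : Matrix (Fin n) (Fin n) ℝ)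
  rwa [← Matrix.star_eq_conjTranspose] at this

lemma cj_sub (hA : A.IsHermitian) (d e : Fin n → ℝ) :
    cj hA d - cj hA e = cj hA (d - e) := by
  unfold cj
  conv_rhs => rw [show d - e = fun i => d i - e i from rfl, ← Matrix.diagonal_sub,
    Matrix.mul_sub, Matrix.sub_mul]

end ConstrainedAux

open Finset in
open ConstrainedAux in
/-- For symmetric positive semidefinite `M` and `φ(ε) → ∞` as `ε → 0⁺`,
`inf { trace(Aᵀ(M + ηI)A) : A pos. def., det A = 1, A ≤ φ(ε)I }` converges to
`n (det M)^{1/n}` as `(ε, η) → (0, 0)` with `ε, η > 0`. -/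
theorem constrained_inf_tendsto_posSemidef (n : ℕ) (hn : 0 < n) (φ : ℝ → ℝ)
    (hφ : Tendsto φ (nhdsWithin 0 (Set.Ioi 0)) atTop)
    (M : Matrix (Fin n) (Fin n) ℝ) (hM : M.PosSemidef) :
    Tendsto (fun p : ℝ × ℝ =>
        sInf {x : ℝ | ∃ A : Matrix (Fin n) (Fin n) ℝ, A.PosDef ∧ A.det = 1 ∧
          (φ p.1 • (1 : Matrix (Fin n) (Fin n) ℝ) - A).PosSemidef ∧
          x = (Aᵀ * (M + p.2 • (1 : Matrix (Fin n) (Fin n) ℝ)) * A).trace})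
      ((nhdsWithin 0 (Set.Ioi 0)) ×ˢ (nhdsWithin 0 (Set.Ioi 0)))
      (nhds (n * M.det ^ ((1 : ℝ) / n))) := by
  have hn' : (0 : ℝ) < n := Nat.cast_pos.mpr hn
  set L : ℝ := n * M.det ^ ((1 : ℝ) / n) with hLdef
  set μ : Fin n → ℝ := hM.1.eigenvalues with hmudef
  have hμ : ∀ i, 0 ≤ μ i := hM.eigenvalues_nonneg
  have hdetM : M.det = ∏ i, μ i := by simpa using hM.1.det_eq_prod_eigenvalues
  rw [Metric.tendsto_nhds]
  intro δ hδ
  -- choose t > 0 such that n * (∏ (μ i + t))^{1/n} < L + δ/2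
  have hcont : ContinuousAt (fun t : ℝ => (n : ℝ) * (∏ i, (μ i + t)) ^ ((1 : ℝ) / n)) 0 := by
    have h1 : ContinuousAt (fun t : ℝ => ∏ i, (μ i + t)) 0 :=
      (continuous_finset_prod _ (fun i _ => continuous_const.add continuous_id)).continuousAt
    exact continuousAt_const.mul (h1.rpow_const (Or.inr (by positivity)))
  have hval : (fun t : ℝ => (n : ℝ) * (∏ i, (μ i + t)) ^ ((1 : ℝ) / n)) 0 < L + δ / 2 := by
    simp only [add_zero]
    rw [hLdef, ← hdetM]
    linarith
  have hev : ∀ᶠ t in nhdsWithin (0 : ℝ) (Set.Ioi 0),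
      (n : ℝ) * (∏ i, (μ i + t)) ^ ((1 : ℝ) / n) < L + δ / 2 :=
    Filter.Eventually.filter_mono nhdsWithin_le_nhds (hcont.eventually_lt_const hval)
  obtain ⟨t, htlt, ht0⟩ := (hev.and self_mem_nhdsWithin).exists
  replace ht0 : (0 : ℝ) < t := ht0
  set P : ℝ := ∏ i, (μ i + t) with hPdef
  have hμt : ∀ i, 0 < μ i + t := fun i => by have := hμ i; linarith
  have hP : 0 < P := Finset.prod_pos fun i _ => hμt i
  set a : Fin n → ℝ := fun i => P ^ ((1 : ℝ) / (2 * n)) * (μ i + t) ^ (-(1 : ℝ) / 2) with hadef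
  have ha : ∀ i, 0 < a i := fun i =>
    mul_pos (Real.rpow_pos_of_pos hP _) (Real.rpow_pos_of_pos (hμt i) _)
  have hsq : ∀ i, a i ^ 2 * (μ i + t) = P ^ ((1 : ℝ) / n) := by
    intro i
    rw [hadef, mul_pow, ← Real.rpow_natCast (P ^ _) 2, ← Real.rpow_natCast ((μ i + t) ^ _) 2,
      ← Real.rpow_mul hP.le, ← Real.rpow_mul (hμt i).le,
      show ((1 : ℝ) / (2 * n) * (2 : ℕ)) = 1 / n by push_cast; field_simp,
      show ((-(1 : ℝ) / 2) * (2 : ℕ)) = -1 by push_cast; ring,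
      Real.rpow_neg_one, mul_assoc, inv_mul_cancel₀ (hμt i).ne', mul_one]
  have hprod : ∏ i, a i = 1 := by
    rw [hadef, Finset.prod_mul_distrib, Finset.prod_const, Finset.card_univ, Fintype.card_fin,
      ← Real.rpow_natCast (P ^ _) n, ← Real.rpow_mul hP.le,
      Real.finset_prod_rpow _ _ (fun i _ => (hμt i).le), ← hPdef, ← Real.rpow_add hP,
      show ((1 : ℝ) / (2 * n) * n + -1 / 2) = 0 by field_simp; ring, Real.rpow_zero]
  -- eventual facts
  have hev1 : ∀ᶠ ε in nhdsWithin (0 : ℝ) (Set.Ioi 0), ∀ i, a i ≤ φ ε :=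
    eventually_all.mpr fun i => hφ.eventually (eventually_ge_atTop (a i))
  have hev2 : ∀ᶠ η in nhdsWithin (0 : ℝ) (Set.Ioi 0), η ∈ Set.Ioc 0 t :=
    Ioc_mem_nhdsGT ht0
  filter_upwards [hev1.prod_mk hev2] with p hp
  obtain ⟨hpφ, hpη⟩ := hp
  have hη0 : 0 < p.2 := hpη.1
  have hηt : p.2 ≤ t := hpη.2
  -- N = M + η I as conjugated diagonal
  have hNeq : M + p.2 • (1 : Matrix (Fin n) (Fin n) ℝ) = cj hM.1 (μ + fun _ => p.2) := by
    rw [← cj_add hM.1 μ (fun _ => p.2), ← cj_spectral hM.1, cj_const hM.1]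
  set x₀ : ℝ := ∑ i, a i ^ 2 * (μ i + p.2) with hx0def
  have hmem : x₀ ∈ {x : ℝ | ∃ A : Matrix (Fin n) (Fin n) ℝ, A.PosDef ∧ A.det = 1 ∧
      (φ p.1 • (1 : Matrix (Fin n) (Fin n) ℝ) - A).PosSemidef ∧
      x = (Aᵀ * (M + p.2 • (1 : Matrix (Fin n) (Fin n) ℝ)) * A).trace} := by
    refine ⟨cj hM.1 a, cj_posDef hM.1 ha, by rw [cj_det]; exact hprod, ?_, ?_⟩
    · rw [← cj_const hM.1 (φ p.1), cj_sub hM.1]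
      exact cj_posSemidef hM.1 fun i => sub_nonneg.mpr (hpφ i)
    · rw [cj_transpose, hNeq, cj_mul, cj_mul, cj_trace, hx0def]
      exact Finset.sum_congr rfl fun i _ => by
        show a i ^ 2 * (μ i + p.2) = a i * (μ i + p.2) * a i
        ring
  -- upper bound on x₀
  have hx0le : x₀ ≤ L + δ / 2 := by
    have h1 : x₀ ≤ ∑ i, a i ^ 2 * (μ i + t) := by
      refine Finset.sum_le_sum fun i _ => ?_
      exact mul_le_mul_of_nonneg_left (by linarith) (sq_nonneg _)
    have h2 : ∑ i, a i ^ 2 * (μ i + t) = (n : ℝ) * P ^ ((1 : ℝ) / n) := by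
      rw [Finset.sum_congr rfl fun i _ => hsq i, Finset.sum_const, Finset.card_univ,
        Fintype.card_fin, nsmul_eq_mul]
    linarith
  -- lower bound for all elements
  have hlow : ∀ x ∈ {x : ℝ | ∃ A : Matrix (Fin n) (Fin n) ℝ, A.PosDef ∧ A.det = 1 ∧
      (φ p.1 • (1 : Matrix (Fin n) (Fin n) ℝ) - A).PosSemidef ∧
      x = (Aᵀ * (M + p.2 • (1 : Matrix (Fin n) (Fin n) ℝ)) * A).trace}, L ≤ x := by
    rintro x ⟨A, hApd, hAdet, -, rfl⟩
    have hN : (M + p.2 • (1 : Matrix (Fin n) (Fin n) ℝ)).PosSemidef := by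
      rw [hNeq]
      exact cj_posSemidef hM.1 fun i => by have := hμ i; simp only [Pi.add_apply]; linarith
    have hB : (Aᵀ * (M + p.2 • (1 : Matrix (Fin n) (Fin n) ℝ)) * A).PosSemidef := by
      rw [← Matrix.conjTranspose_eq_transpose_of_trivial]
      exact hN.conjTranspose_mul_mul_same A
    have hdetB : (Aᵀ * (M + p.2 • (1 : Matrix (Fin n) (Fin n) ℝ)) * A).det
        = (M + p.2 • (1 : Matrix (Fin n) (Fin n) ℝ)).det := by
      rw [Matrix.det_mul, Matrix.det_mul, Matrix.det_transpose, hAdet]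
      ring
    have hdetN : M.det ≤ (M + p.2 • (1 : Matrix (Fin n) (Fin n) ℝ)).det := by
      rw [hNeq, cj_det, hdetM]
      exact Finset.prod_le_prod (fun i _ => hμ i)
        (fun i _ => by simp only [Pi.add_apply]; linarith)
    have hMdet0 : 0 ≤ M.det := by
      rw [hdetM]; exact Finset.prod_nonneg fun i _ => hμ i
    calc L ≤ (n : ℝ) * (M + p.2 • (1 : Matrix (Fin n) (Fin n) ℝ)).det ^ ((1 : ℝ) / n) := by
          rw [hLdef]
          exact mul_le_mul_of_nonneg_left
            (Real.rpow_le_rpow hMdet0 hdetN (by positivity)) hn'.le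
      _ ≤ (Aᵀ * (M + p.2 • (1 : Matrix (Fin n) (Fin n) ℝ)) * A).trace := by
          rw [← hdetB]
          exact amgm_trace hn hB
  have hSne : Set.Nonempty _ := ⟨x₀, hmem⟩
  have hbdd : BddBelow _ := ⟨L, fun x hx => hlow x hx⟩
  have h1 : L ≤ sInf {x : ℝ | ∃ A : Matrix (Fin n) (Fin n) ℝ, A.PosDef ∧ A.det = 1 ∧
      (φ p.1 • (1 : Matrix (Fin n) (Fin n) ℝ) - A).PosSemidef ∧
      x = (Aᵀ * (M + p.2 • (1 : Matrix (Fin n) (Fin n) ℝ)) * A).trace} := le_csInf hSne hlow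
  have h2 : sInf {x : ℝ | ∃ A : Matrix (Fin n) (Fin n) ℝ, A.PosDef ∧ A.det = 1 ∧
      (φ p.1 • (1 : Matrix (Fin n) (Fin n) ℝ) - A).PosSemidef ∧
      x = (Aᵀ * (M + p.2 • (1 : Matrix (Fin n) (Fin n) ℝ)) * A).trace} ≤ x₀ :=
    csInf_le hbdd hmem
  rw [Real.dist_eq, abs_sub_lt_iff]
  constructor <;> linarith
end

section
/- Let 0 < θ < Θ and let 𝒜 = {A ∈ S₊ⁿ(ℝ) : √θ ≤ λᵢ(A) ≤ √Θ for all eigenvalues λᵢ(A)}. Then for every symmetric n×n real matrix M, inf_{A∈𝒜} trace(Aᵀ M A) = θ · Σ_{λᵢ(M)>0} λᵢ(M) + Θ · Σ_{λᵢ(M)<0} λᵢ(M), i.e., the infimum realizes the (negative-part-weighted) Pucci extremal operator. -/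
set_option maxHeartbeats 1000000


open Matrix

private lemma psd_diag_nonneg {n : ℕ} {P : Matrix (Fin n) (Fin n) ℝ}
    (hP : P.PosSemidef) (i : Fin n) : 0 ≤ P i i := by
  simpa using hP.dotProduct_mulVec_nonneg (Pi.single i 1)

private lemma psd_smul {n : ℕ} {A : Matrix (Fin n) (Fin n) ℝ} (hA : A.PosSemidef)
    {c : ℝ} (hc : 0 ≤ c) : (c • A).PosSemidef := by
  have hh : (c • A)ᴴ = c • A := by
    rw [conjTranspose_smul, star_trivial, hA.1.eq]
  refine .of_dotProduct_mulVec_nonneg hh fun x => ?_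
  simp only [smul_mulVec, dotProduct_smul, smul_eq_mul]
  exact mul_nonneg hc (hA.dotProduct_mulVec_nonneg x)

private lemma sum_ite_eq_pucci {n : ℕ} (θ Θ : ℝ) (ev : Fin n → ℝ) :
    ∑ i, (if 0 < ev i then θ * ev i else Θ * ev i)
      = θ * ∑ i ∈ Finset.univ.filter (fun i => 0 < ev i), ev i
        + Θ * ∑ i ∈ Finset.univ.filter (fun i => ev i < 0), ev i := by
  rw [Finset.sum_ite, Finset.mul_sum, Finset.mul_sum]
  congr 1
  rw [← Finset.sum_subset (s₁ := Finset.univ.filter fun i => ev i < 0)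
      (s₂ := Finset.univ.filter fun i => ¬ 0 < ev i)]
  · intro i hi
    simp only [Finset.mem_filter, Finset.mem_univ, true_and] at hi ⊢
    exact not_lt.mpr hi.le
  · intro i hi hni
    simp only [Finset.mem_filter, Finset.mem_univ, true_and, not_lt] at hi hni
    have : ev i = 0 := le_antisymm hi hni
    simp [this]

/-- Pucci extremal operator as an infimum:
for `0 < θ < Θ` and `𝒜 = {A symmetric : √θ I ≤ A ≤ √Θ I}`,
`inf_{A∈𝒜} trace(AᵀMA) = θ Σ_{λᵢ(M)>0} λᵢ(M) + Θ Σ_{λᵢ(M)<0} λᵢ(M)`. -/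
theorem pucci_inf (n : ℕ) (θ Θ : ℝ) (hθ : 0 < θ) (hθΘ : θ < Θ)
    (M : Matrix (Fin n) (Fin n) ℝ) (hM : M.IsHermitian) :
    sInf {x : ℝ | ∃ A : Matrix (Fin n) (Fin n) ℝ, A.IsHermitian ∧
        (A - Real.sqrt θ • (1 : Matrix (Fin n) (Fin n) ℝ)).PosSemidef ∧
        (Real.sqrt Θ • (1 : Matrix (Fin n) (Fin n) ℝ) - A).PosSemidef ∧
        x = (Aᵀ * M * A).trace}
      = θ * ∑ i ∈ Finset.univ.filter (fun i => 0 < hM.eigenvalues i), hM.eigenvalues i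
        + Θ * ∑ i ∈ Finset.univ.filter (fun i => hM.eigenvalues i < 0), hM.eigenvalues i := by
  have hΘ : 0 < Θ := hθ.trans hθΘ
  have hsθ : Real.sqrt θ * Real.sqrt θ = θ := Real.mul_self_sqrt hθ.le
  have hsΘ : Real.sqrt Θ * Real.sqrt Θ = Θ := Real.mul_self_sqrt hΘ.le
  have hsle : Real.sqrt θ ≤ Real.sqrt Θ := Real.sqrt_le_sqrt hθΘ.le
  set ev := hM.eigenvalues with hev
  set U : Matrix (Fin n) (Fin n) ℝ := (hM.eigenvectorUnitary : Matrix (Fin n) (Fin n) ℝ)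
    with hUdef
  have hU1 : U * star U = 1 := Matrix.mem_unitaryGroup_iff.mp hM.eigenvectorUnitary.2
  have hU1' : star U * U = 1 := Matrix.mem_unitaryGroup_iff'.mp hM.eigenvectorUnitary.2
  have hspec : M = U * diagonal ev * star U := by
    simpa [Function.comp_def] using hM.spectral_theorem
  set m : ℝ := θ * ∑ i ∈ Finset.univ.filter (fun i => 0 < ev i), ev i
        + Θ * ∑ i ∈ Finset.univ.filter (fun i => ev i < 0), ev i with hm
  set 𝒜 : Set ℝ := {x : ℝ | ∃ A : Matrix (Fin n) (Fin n) ℝ, A.IsHermitian ∧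
        (A - Real.sqrt θ • (1 : Matrix (Fin n) (Fin n) ℝ)).PosSemidef ∧
        (Real.sqrt Θ • (1 : Matrix (Fin n) (Fin n) ℝ) - A).PosSemidef ∧
        x = (Aᵀ * M * A).trace} with h𝒜
  -- helper facts about conjugation by U
  have hUc : ∀ c : ℝ, U * diagonal (fun _ : Fin n => c) * star U
      = c • (1 : Matrix (Fin n) (Fin n) ℝ) := by
    intro c
    rw [← smul_one_eq_diagonal, mul_smul_comm, mul_one, smul_mul_assoc, hU1]
  have hUsub : ∀ e f : Fin n → ℝ, U * diagonal e * star U - U * diagonal f * star U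
      = U * diagonal (fun i => e i - f i) * star U := by
    intro e f
    rw [← Matrix.sub_mul, ← Matrix.mul_sub, diagonal_sub]
  have hkey : ∀ e : Fin n → ℝ, (∀ i, 0 ≤ e i) → (U * diagonal e * star U).PosSemidef := by
    intro e he
    rw [star_eq_conjTranspose]
    exact (posSemidef_diagonal_iff.mpr he).mul_mul_conjTranspose_same U
  have htr : ∀ Y : Matrix (Fin n) (Fin n) ℝ, (U * Y * star U).trace = Y.trace := by
    intro Y
    rw [trace_mul_cycle, hU1', one_mul]
  -- the candidate minimizer
  set d : Fin n → ℝ := fun i => if 0 < ev i then Real.sqrt θ else Real.sqrt Θ with hd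
  set A₀ : Matrix (Fin n) (Fin n) ℝ := U * diagonal d * star U with hA₀
  have hA₀herm : A₀.IsHermitian := by
    rw [hA₀, star_eq_conjTranspose]
    exact isHermitian_mul_mul_conjTranspose U (isHermitian_diagonal d)
  have hmem : m ∈ 𝒜 := by
    refine ⟨A₀, hA₀herm, ?_, ?_, ?_⟩
    · have h : A₀ - Real.sqrt θ • 1 = U * diagonal (fun i => d i - Real.sqrt θ) * star U := by
        rw [hA₀, ← hUc (Real.sqrt θ), hUsub]
      rw [h]
      refine hkey _ fun i => ?_
      by_cases hi : 0 < ev i <;> simp [hd, hi, hsle]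
    · have h : Real.sqrt Θ • 1 - A₀ = U * diagonal (fun i => Real.sqrt Θ - d i) * star U := by
        rw [hA₀, ← hUc (Real.sqrt Θ), hUsub]
      rw [h]
      refine hkey _ fun i => ?_
      by_cases hi : 0 < ev i <;> simp [hd, hi, hsle]
    · have hAT : A₀ᵀ = A₀ := by
        rw [← conjTranspose_eq_transpose_of_trivial, hA₀herm.eq]
      have hcollapse : A₀ᵀ * M * A₀
          = U * (diagonal d * diagonal ev * diagonal d) * star U := by
        rw [hAT, hA₀, hspec]
        simp only [Matrix.mul_assoc, hU1']
        simp only [← Matrix.mul_assoc, hU1', Matrix.one_mul, Matrix.mul_one]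
      rw [hcollapse, htr, diagonal_mul_diagonal, diagonal_mul_diagonal, trace_diagonal]
      rw [hm, ← sum_ite_eq_pucci θ Θ ev]
      refine Finset.sum_congr rfl fun i _ => ?_
      by_cases hi : 0 < ev i
      · simp only [hd, hi, if_true]
        rw [mul_right_comm, hsθ]
      · simp only [hd, hi, if_false]
        rw [mul_right_comm, hsΘ]
  -- lower bound
  have hlb : ∀ x ∈ 𝒜, m ≤ x := by
    rintro x ⟨A, hAh, h1, h2, rfl⟩
    have hIθ : (Real.sqrt θ • (1 : Matrix (Fin n) (Fin n) ℝ)).PosSemidef := by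
      rw [smul_one_eq_diagonal]
      exact posSemidef_diagonal_iff.mpr fun i => Real.sqrt_nonneg θ
    have hApsd : A.PosSemidef := by
      have := h1.add hIθ
      simpa using this
    set S : Matrix (Fin n) (Fin n) ℝ := (open scoped MatrixOrder in CFC.sqrt A) with hSdef
    have hS : S * S = A := (open scoped MatrixOrder in CFC.sqrt_mul_sqrt_self A hApsd.nonneg)
    have hSps : S.PosSemidef := (open scoped MatrixOrder in (CFC.sqrt_nonneg A).posSemidef)
    have e1 : S * (A - Real.sqrt θ • 1) * Sᴴ = A * A - Real.sqrt θ • A := by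
      rw [hSps.1.eq, ← hS]
      simp only [Matrix.mul_sub, Matrix.sub_mul, mul_smul_comm, smul_mul_assoc,
        Matrix.mul_one, Matrix.one_mul, Matrix.mul_assoc]
    have e2 : S * (Real.sqrt Θ • 1 - A) * Sᴴ = Real.sqrt Θ • A - A * A := by
      rw [hSps.1.eq, ← hS]
      simp only [Matrix.mul_sub, Matrix.sub_mul, mul_smul_comm, smul_mul_assoc,
        Matrix.mul_one, Matrix.one_mul, Matrix.mul_assoc]
    have hB1 : (A * A - θ • (1 : Matrix (Fin n) (Fin n) ℝ)).PosSemidef := by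
      have h : A * A - θ • (1 : Matrix (Fin n) (Fin n) ℝ)
          = Real.sqrt θ • (A - Real.sqrt θ • 1) + S * (A - Real.sqrt θ • 1) * Sᴴ := by
        rw [e1, smul_sub, smul_smul, hsθ]
        abel
      rw [h]
      exact (psd_smul h1 (Real.sqrt_nonneg θ)).add (h1.mul_mul_conjTranspose_same S)
    have hB2 : (Θ • (1 : Matrix (Fin n) (Fin n) ℝ) - A * A).PosSemidef := by
      have h : Θ • (1 : Matrix (Fin n) (Fin n) ℝ) - A * A
          = Real.sqrt Θ • (Real.sqrt Θ • 1 - A) + S * (Real.sqrt Θ • 1 - A) * Sᴴ := by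
        rw [e2, smul_sub, smul_smul, hsΘ]
        abel
      rw [h]
      exact (psd_smul h2 (Real.sqrt_nonneg Θ)).add (h2.mul_mul_conjTranspose_same S)
    set C : Matrix (Fin n) (Fin n) ℝ := star U * (A * A) * U with hCdef
    have hconjC : ∀ X : Matrix (Fin n) (Fin n) ℝ,
        star U * X * U = Uᴴ * X * U := by
      intro X; rw [star_eq_conjTranspose]
    have hC1 : ∀ i, θ ≤ C i i := by
      intro i
      have hP := hB1.conjTranspose_mul_mul_same U
      have hexp : Uᴴ * (A * A - θ • 1) * U = C - θ • 1 := by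
        rw [← star_eq_conjTranspose, Matrix.mul_sub, Matrix.sub_mul, hCdef]
        congr 1
        rw [mul_smul_comm, mul_one, smul_mul_assoc, hU1']
      rw [hexp] at hP
      have := psd_diag_nonneg hP i
      simp only [Matrix.sub_apply, Matrix.smul_apply, Matrix.one_apply_eq,
        smul_eq_mul, mul_one] at this
      linarith
    have hC2 : ∀ i, C i i ≤ Θ := by
      intro i
      have hP := hB2.conjTranspose_mul_mul_same U
      have hexp : Uᴴ * (Θ • 1 - A * A) * U = Θ • 1 - C := by
        rw [← star_eq_conjTranspose, Matrix.mul_sub, Matrix.sub_mul, hCdef]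
        congr 1
        rw [mul_smul_comm, mul_one, smul_mul_assoc, hU1']
      rw [hexp] at hP
      have := psd_diag_nonneg hP i
      simp only [Matrix.sub_apply, Matrix.smul_apply, Matrix.one_apply_eq,
        smul_eq_mul, mul_one] at this
      linarith
    have hAT : Aᵀ = A := by
      rw [← conjTranspose_eq_transpose_of_trivial, hAh.eq]
    have htrace : (Aᵀ * M * A).trace = ∑ i, ev i * C i i := by
      have t2 : M * (A * A) = U * (diagonal ev * C) * star U := by
        rw [hspec, hCdef]
        simp only [Matrix.mul_assoc, hU1, hU1', Matrix.mul_one, Matrix.one_mul]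
      rw [hAT, trace_mul_cycle, trace_mul_comm, t2, htr]
      simp [Matrix.trace, Matrix.diag, diagonal_mul]
    rw [htrace, hm, ← sum_ite_eq_pucci θ Θ ev]
    refine Finset.sum_le_sum fun i _ => ?_
    by_cases hi : 0 < ev i
    · simp only [hi, if_true]
      rw [mul_comm θ (ev i)]
      exact mul_le_mul_of_nonneg_left (hC1 i) hi.le
    · simp only [hi, if_false]
      rw [mul_comm Θ (ev i)]
      exact mul_le_mul_of_nonpos_left (hC2 i) (not_lt.mp hi)
  exact le_antisymm (csInf_le ⟨m, hlb⟩ hmem) (le_csInf ⟨m, hmem⟩ hlb)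
end

section
/- Let u be a C^{2,1} function near (x,t) ∈ ℝⁿ × ℝ (twice continuously differentiable in x, once in t), let A be a symmetric positive semidefinite n×n matrix and b > 0. Then the average of u over the space-time cylinder satisfies: (1/(b ε²/(n+2))) ∫_{t − bε²/(n+2)}^{t} (1/|B_ε|) ∫_{B_ε(0)} u(x + Ay, s) dy ds − u(x,t) = (ε²/(2(n+2))) [ trace(Aᵀ D²u(x,t) A) − b ∂u/∂t(x,t) ] + o(ε²) as ε → 0⁺. -/
open Matrix MeasureTheory Filter RealInnerProductSpace Metric

variable {n : ℕ}
local notation "E" => EuclideanSpace ℝ (Fin n)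


lemma odd_integral_ball (f : EuclideanSpace ℝ (Fin n) → ℝ) (hf : ∀ y, f (-y) = - f y)
    (ε : ℝ) : ∫ y in ball (0:E) ε, f y = 0 := by
  have h1 : ∫ y in ball (0:E) ε, f y = ∫ y, (ball (0:E) ε).indicator f y :=
    (integral_indicator measurableSet_ball).symm
  have h2 : ∫ y, (ball (0:E) ε).indicator f (-y) = ∫ y, (ball (0:E) ε).indicator f y :=
    integral_neg_eq_self _ _
  have h3 : ∀ y, (ball (0:E) ε).indicator f (-y) = - (ball (0:E) ε).indicator f y := by
    intro y
    by_cases hy : y ∈ ball (0:E) ε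
    · have hy' : -y ∈ ball (0:E) ε := by simpa using hy
      simp [Set.indicator_of_mem, hy, hy', hf y]
    · have hy' : -y ∉ ball (0:E) ε := by simpa using hy
      simp [Set.indicator_of_notMem, hy, hy']
  rw [h1]
  have := h2.symm.trans (by simp_rw [h3]; rw [integral_neg])
  linarith

lemma integral_normsq_ball (hn : 0 < n) {ε : ℝ} (hε : 0 < ε) :
    ∫ y in ball (0:E) ε, ‖y‖^2
      = ((n : ℝ)/(n+2)) * ε^2 * (volume (ball (0:E) ε)).toReal := by
  haveI : Nontrivial (EuclideanSpace ℝ (Fin n)) := by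
    apply Module.nontrivial_of_finrank_pos (R := ℝ)
    rw [finrank_euclideanSpace_fin]; exact hn
  set f : ℝ → ℝ := fun r => if r < ε then r^2 else 0 with hf
  have key := MeasureTheory.integral_fun_norm_addHaar (volume : Measure (EuclideanSpace ℝ (Fin n))) f
  have h1 : ∫ (y : E), f ‖y‖ = ∫ y in ball (0:E) ε, ‖y‖^2 := by
    rw [← integral_indicator (measurableSet_ball)]
    congr 1
    ext y
    by_cases hy : y ∈ ball (0:E) ε
    · have := mem_ball_zero_iff.mp hy
      simp [f, this, Set.indicator_of_mem, hy]
    · have : ¬ ‖y‖ < ε := by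
        simpa [mem_ball_zero_iff] using hy
      simp [f, this, Set.indicator_of_notMem, hy]
  have h2 : ∫ r in Set.Ioi (0:ℝ), r ^ (Module.finrank ℝ (EuclideanSpace ℝ (Fin n)) - 1) • f r
      = ε^(n+2)/(n+2) := by
    rw [finrank_euclideanSpace_fin]
    have heq : ∀ r ∈ Set.Ioi (0:ℝ), r ^ (n-1) • f r
        = (Set.Ioo (0:ℝ) ε).indicator (fun r => r^(n+1)) r := by
      intro r hr
      simp only [Set.mem_Ioi] at hr
      by_cases h : r < ε
      · rw [Set.indicator_of_mem (by exact ⟨hr, h⟩)]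
        simp only [f, if_pos h, smul_eq_mul]
        rw [← pow_add]
        congr 1
        omega
      · rw [Set.indicator_of_notMem (by simp [Set.mem_Ioo, h])]
        simp [f, h]
    rw [setIntegral_congr_fun measurableSet_Ioi heq,
      integral_indicator measurableSet_Ioo, Measure.restrict_restrict measurableSet_Ioo,
      Set.Ioo_inter_Ioi, max_self]
    have h3 : ∫ r in Set.Ioo (0:ℝ) ε, r^(n+1) = ∫ r in Set.Ioc (0:ℝ) ε, r^(n+1) :=
      (integral_Ioc_eq_integral_Ioo).symm
    rw [h3, ← intervalIntegral.integral_of_le hε.le, integral_pow]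
    push_cast
    ring
  rw [h1, h2, finrank_euclideanSpace_fin] at key
  rw [key, Measure.addHaar_ball _ _ hε.le, finrank_euclideanSpace_fin]
  rw [ENNReal.toReal_mul, ENNReal.toReal_ofReal (by positivity)]
  simp only [nsmul_eq_mul, smul_eq_mul]
  rw [show n + 2 = n + 2 from rfl]
  field_simp
  rw [measureReal_def]; ring

lemma integrableOn_ball_of_continuous (f : EuclideanSpace ℝ (Fin n) → ℝ) (hf : Continuous f)
    (ε : ℝ) : IntegrableOn f (ball (0:E) ε) :=
  (hf.continuousOn.integrableOn_compact (isCompact_closedBall (0:E) ε)).mono_set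
    ball_subset_closedBall

lemma continuous_coord (i : Fin n) : Continuous (fun y : E => y i) :=
  (EuclideanSpace.proj (𝕜 := ℝ) i).continuous

/-- change of variables along a linear isometry equivalence fixing the ball -/
lemma setIntegral_ball_comp_isometry (e : EuclideanSpace ℝ (Fin n) ≃ₗᵢ[ℝ] EuclideanSpace ℝ (Fin n))
    (f : EuclideanSpace ℝ (Fin n) → ℝ) (ε : ℝ) :
    ∫ y in ball (0:E) ε, f (e y) = ∫ y in ball (0:E) ε, f y := by
  have hmp := e.measurePreserving
  have hemb : MeasurableEmbedding (e : EuclideanSpace ℝ (Fin n) → EuclideanSpace ℝ (Fin n)) :=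
    e.toHomeomorph.measurableEmbedding
  have hpre : (e : EuclideanSpace ℝ (Fin n) → EuclideanSpace ℝ (Fin n)) ⁻¹' (ball (0:E) ε)
      = ball (0:E) ε := by
    ext y
    simp [mem_ball_zero_iff]
  have := hmp.setIntegral_preimage_emb hemb f (ball (0:E) ε)
  rw [hpre] at this
  exact this

lemma integral_coord_mul (i j : Fin n) (hij : i ≠ j) (ε : ℝ) :
    ∫ y in ball (0:E) ε, (y i) * (y j) = 0 := by
  classical
  set e : EuclideanSpace ℝ (Fin n) ≃ₗᵢ[ℝ] EuclideanSpace ℝ (Fin n) :=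
    LinearIsometryEquiv.piLpCongrRight 2
      (fun k : Fin n => if k = i then LinearIsometryEquiv.neg ℝ else LinearIsometryEquiv.refl ℝ ℝ)
  have he : ∀ (y : E) (k : Fin n), e y k = if k = i then -(y k) else y k := by
    intro y k
    by_cases h : k = i
    · subst h; simp [e, LinearIsometryEquiv.piLpCongrRight]
    · simp [e, LinearIsometryEquiv.piLpCongrRight, h]
  have key := setIntegral_ball_comp_isometry e (fun y => (y i) * (y j)) ε
  have : ∀ y : E, (e y i) * (e y j) = -((y i) * (y j)) := by
    intro y
    rw [he y i, he y j, if_pos rfl, if_neg hij.symm]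
    ring
  simp only [this] at key
  rw [integral_neg] at key
  linarith

lemma integral_coord_sq (hn : 0 < n) (i : Fin n) {ε : ℝ} (hε : 0 < ε) :
    ∫ y in ball (0:E) ε, (y i)^2
      = (ε^2/(n+2)) * (volume (ball (0:E) ε)).toReal := by
  classical
  -- all coordinates give the same integral
  have hswap : ∀ j : Fin n, ∫ y in ball (0:E) ε, (y j)^2 = ∫ y in ball (0:E) ε, (y i)^2 := by
    intro j
    set e : EuclideanSpace ℝ (Fin n) ≃ₗᵢ[ℝ] EuclideanSpace ℝ (Fin n) :=
      LinearIsometryEquiv.piLpCongrLeft 2 ℝ ℝ (Equiv.swap i j)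
    have key := setIntegral_ball_comp_isometry e (fun y => (y j)^2) ε
    have he : ∀ y : E, e y j = y i := by
      intro y
      have : e y j = y ((Equiv.swap i j).symm j) := rfl
      rw [this, Equiv.symm_swap, Equiv.swap_apply_right]
    simp only [he] at key
    exact key.symm
  have hns : ∀ y : E, ‖y‖^2 = ∑ j : Fin n, (y j)^2 := by
    intro y
    rw [EuclideanSpace.norm_eq, Real.sq_sqrt (by positivity)]
    simp [sq_abs]
  have hsum : ∑ j : Fin n, ∫ y in ball (0:E) ε, (y j)^2
      = ∫ y in ball (0:E) ε, ‖y‖^2 := by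
    rw [← integral_finset_sum _
      (fun j _ => integrableOn_ball_of_continuous (fun y : E => (y j)^2) ((continuous_coord j).pow 2) ε)]
    exact setIntegral_congr_fun measurableSet_ball (fun y _ => (hns y).symm)
  rw [integral_normsq_ball hn hε] at hsum
  simp only [hswap, Finset.sum_const, Finset.card_univ, Fintype.card_fin, nsmul_eq_mul] at hsum
  have hn' : (n:ℝ) ≠ 0 := Nat.cast_ne_zero.mpr hn.ne'
  exact mul_left_cancel₀ hn' (hsum.trans (by ring))

lemma integral_quadform_ball (M : Matrix (Fin n) (Fin n) ℝ) {ε : ℝ} (hε : 0 < ε) :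
    ∫ y in ball (0:E) ε,
        (((WithLp.equiv 2 (Fin n → ℝ)) y) ⬝ᵥ M.mulVec ((WithLp.equiv 2 (Fin n → ℝ)) y))
      = M.trace * (ε^2/(n+2)) * (volume (ball (0:E) ε)).toReal := by
  rcases Nat.eq_zero_or_pos n with hn | hn
  · subst hn
    simp [Matrix.trace, dotProduct]
  have expand : ∀ y : E,
      (((WithLp.equiv 2 (Fin n → ℝ)) y) ⬝ᵥ M.mulVec ((WithLp.equiv 2 (Fin n → ℝ)) y))
        = ∑ i : Fin n, ∑ j : Fin n, M i j * (y i * y j) := by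
    intro y
    simp only [dotProduct, Matrix.mulVec, WithLp.equiv_apply, Finset.mul_sum]
    exact Finset.sum_congr rfl fun i _ => Finset.sum_congr rfl fun j _ => by ring
  rw [setIntegral_congr_fun measurableSet_ball (fun y _ => expand y)]
  rw [integral_finset_sum _ (fun i _ => integrableOn_ball_of_continuous _
    (by exact continuous_finset_sum _ fun j _ =>
      (continuous_const.mul ((continuous_coord i).mul (continuous_coord j)))) ε)]
  have hterm : ∀ i : Fin n, ∫ y in ball (0:E) ε, ∑ j : Fin n, M i j * (y i * y j)
      = M i i * ((ε^2/(n+2)) * (volume (ball (0:E) ε)).toReal) := by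
    intro i
    rw [integral_finset_sum _ (fun j _ => integrableOn_ball_of_continuous (fun y : E => M i j * (y i * y j))
      (continuous_const.mul ((continuous_coord i).mul (continuous_coord j))) ε)]
    rw [Finset.sum_eq_single i]
    · rw [integral_const_mul]
      congr 1
      have : ∀ y : E, y i * y i = (y i)^2 := fun y => (sq (y i)).symm
      rw [setIntegral_congr_fun measurableSet_ball (fun y _ => this y)]
      exact integral_coord_sq hn i hε
    · intro j _ hj
      rw [integral_const_mul, integral_coord_mul i j (Ne.symm hj) ε, mul_zero]
    · intro h
      exact absurd (Finset.mem_univ i) h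
  simp only [hterm, ← Finset.sum_mul]
  rw [Matrix.trace]
  simp [Matrix.diag]
  ring

lemma integral_linear_ball (g : EuclideanSpace ℝ (Fin n)) (A : Matrix (Fin n) (Fin n) ℝ)
    (ε : ℝ) :
    ∫ y in ball (0:E) ε,
        (inner ℝ g ((WithLp.equiv 2 (Fin n → ℝ)).symm (A.mulVec ((WithLp.equiv 2 (Fin n → ℝ)) y))) : ℝ)
      = 0 := by
  apply odd_integral_ball
  intro y
  have h1 : (WithLp.equiv 2 (Fin n → ℝ)) (-y) = -((WithLp.equiv 2 (Fin n → ℝ)) y) := rfl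
  rw [h1, Matrix.mulVec_neg]
  have h2 : (WithLp.equiv 2 (Fin n → ℝ)).symm (-(A.mulVec ((WithLp.equiv 2 (Fin n → ℝ)) y)))
      = -((WithLp.equiv 2 (Fin n → ℝ)).symm (A.mulVec ((WithLp.equiv 2 (Fin n → ℝ)) y))) := rfl
  rw [h2, inner_neg_right]

lemma integral_time_piece (t τ : ℝ) (hτ : 0 ≤ τ) :
    ∫ s in Set.Ioc (t - τ) t, (s - t) = -τ^2/2 := by
  rw [← intervalIntegral.integral_of_le (by linarith)]
  rw [intervalIntegral.integral_sub intervalIntegral.intervalIntegrable_id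
    (intervalIntegrable_const (c := t))]
  rw [integral_id, intervalIntegral.integral_const]
  simp [smul_eq_mul]
  ring

lemma continuousOn_param_integral {a c ε : ℝ}
    (W : EuclideanSpace ℝ (Fin n) × ℝ → ℝ)
    (hW : ContinuousOn W (closedBall (0:E) ε ×ˢ Set.Icc a c)) :
    ContinuousOn (fun s => ∫ y in ball (0:E) ε, W (y, s)) (Set.Icc a c) := by
  intro s₀ hs₀
  obtain ⟨B, hB⟩ :=
    (((isCompact_closedBall (0:E) ε).prod isCompact_Icc).exists_bound_of_continuousOn hW)
  apply continuousWithinAt_of_dominated (bound := fun _ => B)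
  · filter_upwards [self_mem_nhdsWithin] with s hs
    apply ContinuousOn.aestronglyMeasurable ?_ measurableSet_ball
    have : ContinuousOn (fun y : E => W (y, s)) (closedBall (0:E) ε) := by
      apply hW.comp (Continuous.continuousOn (by fun_prop))
      intro y hy
      exact ⟨hy, hs⟩
    exact this.mono ball_subset_closedBall
  · filter_upwards [self_mem_nhdsWithin] with s hs
    filter_upwards [ae_restrict_mem measurableSet_ball] with y hy
    exact hB (y, s) ⟨ball_subset_closedBall hy, hs⟩
  · exact integrableOn_const measure_ball_lt_top.ne
  · filter_upwards [ae_restrict_mem measurableSet_ball] with y hy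
    have : ContinuousOn (fun s => W (y, s)) (Set.Icc a c) := by
      apply hW.comp (Continuous.continuousOn (by fun_prop))
      intro s hs
      exact ⟨ball_subset_closedBall hy, hs⟩
    exact this s₀ hs₀

lemma continuous_quadform (M : Matrix (Fin n) (Fin n) ℝ) :
    Continuous (fun y : E =>
      ((WithLp.equiv 2 (Fin n → ℝ)) y) ⬝ᵥ M.mulVec ((WithLp.equiv 2 (Fin n → ℝ)) y)) := by
  simp only [dotProduct, Matrix.mulVec, WithLp.equiv_apply]
  exact continuous_finset_sum _ fun i _ => (continuous_coord i).mul
    (continuous_finset_sum _ fun j _ => continuous_const.mul (continuous_coord j))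

lemma integrableOn_ball_of_continuousOn {f : EuclideanSpace ℝ (Fin n) → ℝ} {ε : ℝ}
    (hf : ContinuousOn f (closedBall (0:E) ε)) : IntegrableOn f (ball (0:E) ε) :=
  (hf.integrableOn_compact (isCompact_closedBall (0:E) ε)).mono_set ball_subset_closedBall

lemma quad_rewrite (A H : Matrix (Fin n) (Fin n) ℝ) (v : Fin n → ℝ) :
    (A.mulVec v) ⬝ᵥ H.mulVec (A.mulVec v) = v ⬝ᵥ (Aᵀ * H * A).mulVec v := by
  rw [mul_assoc, Matrix.dotProduct_mulVec v, ← Matrix.vecMul_vecMul,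
    Matrix.vecMul_transpose, ← Matrix.dotProduct_mulVec, Matrix.mulVec_mulVec]

set_option maxHeartbeats 1000000

/-- Space-time cylinder average expansion: if `u` is `C^{2,1}` near `(x,t)` (expressed via
continuity near `(x,t)` together with a second-order space / first-order time Taylor
expansion with remainder `o(|y-x|² + |s-t|)`, with gradient `g`, spatial Hessian `H` and
time derivative `ut`), `A` is symmetric positive semidefinite and `b > 0`, then
`⨍_{t-bε²/(n+2)}^t ⨍_{B_ε(0)} u(x+Ay, s) dy ds − u(x,t)
  = (ε²/(2(n+2))) [trace(AᵀHA) − b ∂u/∂t(x,t)] + o(ε²)` as `ε → 0⁺`. -/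
theorem cylinder_average_expansion (n : ℕ) (u : EuclideanSpace ℝ (Fin n) → ℝ → ℝ)
    (x : EuclideanSpace ℝ (Fin n)) (t : ℝ)
    (A H : Matrix (Fin n) (Fin n) ℝ) (hA : A.PosSemidef) (hH : H.IsSymm)
    (b : ℝ) (hb : 0 < b)
    (g : EuclideanSpace ℝ (Fin n)) (ut : ℝ)
    (hcont : ∃ r > (0 : ℝ), ContinuousOn (fun p : EuclideanSpace ℝ (Fin n) × ℝ => u p.1 p.2)
      (Metric.ball x r ×ˢ Set.Ioo (t - r) (t + r)))
    (htaylor : ∀ δ > (0 : ℝ), ∃ ρ > (0 : ℝ), ∀ (y : EuclideanSpace ℝ (Fin n)) (s : ℝ),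
      ‖y - x‖ < ρ → |s - t| < ρ →
      |u y s - (u x t + ut * (s - t) + ⟪g, y - x⟫
          + (1 / 2) * (((WithLp.equiv 2 (Fin n → ℝ)) (y - x)) ⬝ᵥ
              H.mulVec ((WithLp.equiv 2 (Fin n → ℝ)) (y - x))))|
        ≤ δ * (‖y - x‖ ^ 2 + |s - t|)) :
    (fun ε : ℝ =>
        ((n + 2) / (b * ε ^ 2)) *
          (∫ s in Set.Ioc (t - b * ε ^ 2 / (n + 2)) t,
            ((volume (Metric.ball (0 : EuclideanSpace ℝ (Fin n)) ε)).toReal)⁻¹ *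
              ∫ y in Metric.ball (0 : EuclideanSpace ℝ (Fin n)) ε,
                u (x + (WithLp.equiv 2 (Fin n → ℝ)).symm
                    (A.mulVec ((WithLp.equiv 2 (Fin n → ℝ)) y))) s)
          - u x t
          - (ε ^ 2 / (2 * (n + 2))) * ((Aᵀ * H * A).trace - b * ut))
      =o[nhdsWithin 0 (Set.Ioi 0)] fun ε : ℝ => ε ^ 2 := by
  classical
  obtain ⟨r, hr, hcont'⟩ := hcont
  set T : EuclideanSpace ℝ (Fin n) →L[ℝ] EuclideanSpace ℝ (Fin n) :=
    LinearMap.toContinuousLinearMap (Matrix.toEuclideanLin A) with hTdef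
  have hT : ∀ y : EuclideanSpace ℝ (Fin n), (WithLp.equiv 2 (Fin n → ℝ)).symm
      (A.mulVec ((WithLp.equiv 2 (Fin n → ℝ)) y)) = T y := by
    intro y
    rw [hTdef]
    simp [Matrix.toEuclideanLin_apply]
  set CA : ℝ := ‖T‖ with hCAdef
  have hCA0 : 0 ≤ CA := norm_nonneg _
  have hCA : ∀ y : EuclideanSpace ℝ (Fin n), ‖T y‖ ≤ CA * ‖y‖ := fun y => T.le_opNorm y
  have hn2 : (0:ℝ) < (n:ℝ) + 2 := by positivity
  set M₀ : ℝ := CA^2 + b/((n:ℝ)+2) with hM₀def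
  have hM₀ : 0 < M₀ := by positivity
  rw [Asymptotics.isLittleO_iff]
  intro C hC
  set δ : ℝ := C / M₀ with hδdef
  have hδ : 0 < δ := div_pos hC hM₀
  obtain ⟨ρ, hρ, htay⟩ := htaylor δ hδ
  -- eventually conditions on ε
  have hmin : (0:ℝ) < min ρ (r/2) := lt_min hρ (by linarith)
  have e1 : Tendsto (fun ε : ℝ => CA * ε) (nhdsWithin 0 (Set.Ioi 0)) (nhds 0) := by
    have : Tendsto (fun ε : ℝ => CA * ε) (nhds 0) (nhds (CA * 0)) :=
      (continuous_const.mul continuous_id).tendsto 0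
    rw [mul_zero] at this
    exact this.mono_left nhdsWithin_le_nhds
  have e2 : Tendsto (fun ε : ℝ => b * ε^2 / ((n:ℝ)+2)) (nhdsWithin 0 (Set.Ioi 0)) (nhds 0) := by
    have : Tendsto (fun ε : ℝ => b * ε^2 / ((n:ℝ)+2)) (nhds 0) (nhds (b * 0^2 / ((n:ℝ)+2))) :=
      ((continuous_const.mul (continuous_pow 2)).div_const _).tendsto 0
    simp only [ne_eq, OfNat.ofNat_ne_zero, not_false_eq_true, zero_pow, mul_zero, zero_div] at this
    exact this.mono_left nhdsWithin_le_nhds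
  filter_upwards [e1.eventually_lt_const hmin, e2.eventually_lt_const hmin,
    self_mem_nhdsWithin] with ε hε1 hε2 hεpos
  simp only [Set.mem_Ioi] at hεpos
  set τ : ℝ := b * ε^2 / ((n:ℝ)+2) with hτdef
  have hτpos : 0 < τ := by positivity
  have hτρ : τ < ρ := lt_of_lt_of_le hε2 (min_le_left _ _)
  have hτr : τ < r/2 := lt_of_lt_of_le hε2 (min_le_right _ _)
  have hε1ρ : CA * ε < ρ := lt_of_lt_of_le hε1 (min_le_left _ _)
  have hε1r : CA * ε < r/2 := lt_of_lt_of_le hε1 (min_le_right _ _)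
  set V : ℝ := (volume (Metric.ball (0:EuclideanSpace ℝ (Fin n)) ε)).toReal with hVdef
  have hV : 0 < V := by
    rw [hVdef]
    exact ENNReal.toReal_pos (measure_ball_pos volume _ hεpos).ne' measure_ball_lt_top.ne
  set Qc : ℝ := (1/2) * ((Aᵀ * H * A).trace * (ε^2/((n:ℝ)+2))) with hQcdef
  set Eδ : ℝ := δ * ((CA*ε)^2 + τ) with hEδdef
  -- continuity of the inner function on the relevant compact set
  have hmaps : ∀ y : EuclideanSpace ℝ (Fin n), ‖y‖ ≤ ε → ∀ s ∈ Set.Icc (t-τ) t,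
      (x + T y, s) ∈ Metric.ball x r ×ˢ Set.Ioo (t - r) (t + r) := by
    intro y hy s hs
    constructor
    · simp only [Metric.mem_ball, dist_eq_norm, add_sub_cancel_left]
      calc ‖T y‖ ≤ CA * ‖y‖ := hCA y
        _ ≤ CA * ε := mul_le_mul_of_nonneg_left hy hCA0
        _ < r := by linarith
    · exact ⟨by simp at hs ⊢; linarith [hs.1], by simp at hs ⊢; linarith [hs.2]⟩
  -- Taylor estimate for relevant points
  have hstep : ∀ s ∈ Set.Ioc (t - τ) t, ∀ y ∈ Metric.ball (0:EuclideanSpace ℝ (Fin n)) ε,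
      |u (x + T y) s - (u x t + ut * (s - t) + ⟪g, T y⟫
        + (1/2) * (((WithLp.equiv 2 (Fin n → ℝ)) y) ⬝ᵥ
            (Aᵀ * H * A).mulVec ((WithLp.equiv 2 (Fin n → ℝ)) y)))| ≤ Eδ := by
    intro s hs y hy
    have hy' : ‖y‖ < ε := mem_ball_zero_iff.mp hy
    have hTy : ‖T y‖ ≤ CA * ε := le_trans (hCA y) (mul_le_mul_of_nonneg_left hy'.le hCA0)
    have hst : |s - t| ≤ τ := by
      rw [abs_sub_comm, abs_of_nonneg (by linarith [hs.2])]
      linarith [hs.1]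
    have h1 : ‖(x + T y) - x‖ < ρ := by
      rw [add_sub_cancel_left]
      exact lt_of_le_of_lt hTy hε1ρ
    have h2 : |s - t| < ρ := lt_of_le_of_lt hst hτρ
    have := htay (x + T y) s h1 h2
    rw [add_sub_cancel_left] at this
    have hWe : (WithLp.equiv 2 (Fin n → ℝ)) (T y) = A.mulVec ((WithLp.equiv 2 (Fin n → ℝ)) y) := by
      rw [← hT y]
      simp
    rw [hWe, quad_rewrite] at this
    refine le_trans this ?_
    rw [hEδdef]
    have hb2 : ‖T y‖ ^ 2 + |s - t| ≤ (CA*ε)^2 + τ := by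
      have h3 : ‖T y‖ ^ 2 ≤ (CA*ε)^2 := pow_le_pow_left₀ (norm_nonneg _) hTy 2
      linarith
    exact mul_le_mul_of_nonneg_left hb2 hδ.le
  simp only [hT]
  -- the main-term function
  set P : EuclideanSpace ℝ (Fin n) → ℝ → ℝ := fun y s => u x t + ut * (s - t) + ⟪g, T y⟫
    + (1/2) * (((WithLp.equiv 2 (Fin n → ℝ)) y) ⬝ᵥ
        (Aᵀ * H * A).mulVec ((WithLp.equiv 2 (Fin n → ℝ)) y)) with hPdef
  have hPcont : ∀ s : ℝ, Continuous (fun y => P y s) := by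
    intro s
    apply Continuous.add
    · apply Continuous.add continuous_const
      exact Continuous.inner continuous_const T.continuous
    · exact continuous_const.mul (continuous_quadform _)
  have hPint : ∀ s : ℝ, IntegrableOn (fun y => P y s)
      (Metric.ball (0:EuclideanSpace ℝ (Fin n)) ε) :=
    fun s => integrableOn_ball_of_continuous _ (hPcont s) ε
  have hUcont : ∀ s ∈ Set.Icc (t-τ) t, ContinuousOn (fun y => u (x + T y) s)
      (Metric.closedBall (0:EuclideanSpace ℝ (Fin n)) ε) := by
    intro s hs
    have hco : Continuous (fun y : EuclideanSpace ℝ (Fin n) => (x + T y, s)) :=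
      (continuous_const.add T.continuous).prodMk continuous_const
    exact hcont'.comp hco.continuousOn
      (fun y hy => hmaps y (mem_closedBall_zero_iff.mp hy) s hs)
  have hUint : ∀ s ∈ Set.Icc (t-τ) t, IntegrableOn (fun y => u (x + T y) s)
      (Metric.ball (0:EuclideanSpace ℝ (Fin n)) ε) :=
    fun s hs => integrableOn_ball_of_continuousOn (hUcont s hs)
  -- value of the integral of the main term
  have hPeval : ∀ s : ℝ, ∫ y in Metric.ball (0:EuclideanSpace ℝ (Fin n)) ε, P y s
      = V * (u x t + ut * (s - t) + Qc) := by
    intro s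
    simp only [hPdef]
    rw [integral_add (integrableOn_ball_of_continuous (fun y : EuclideanSpace ℝ (Fin n) => u x t + ut * (s - t) + ⟪g, T y⟫) (by
          exact Continuous.add continuous_const (Continuous.inner continuous_const T.continuous)) ε)
        (integrableOn_ball_of_continuous (fun y : EuclideanSpace ℝ (Fin n) => (1/2) * (((WithLp.equiv 2 (Fin n → ℝ)) y) ⬝ᵥ
          (Aᵀ * H * A).mulVec ((WithLp.equiv 2 (Fin n → ℝ)) y))) (continuous_const.mul (continuous_quadform _)) ε)]
    rw [integral_add (integrableOn_ball_of_continuous (fun _ : EuclideanSpace ℝ (Fin n) => u x t + ut * (s - t)) continuous_const ε)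
        (integrableOn_ball_of_continuous (fun y : EuclideanSpace ℝ (Fin n) => ⟪g, T y⟫) (Continuous.inner continuous_const T.continuous) ε)]
    have hlin := integral_linear_ball g A ε
    simp only [hT] at hlin
    rw [hlin, setIntegral_const, integral_const_mul, integral_quadform_ball _ hεpos]
    rw [hQcdef, hVdef]
    simp only [smul_eq_mul, measureReal_def]
    ring
  -- average bound on each time slice
  have havg : ∀ s ∈ Set.Ioc (t - τ) t,
      |V⁻¹ * (∫ y in Metric.ball (0:EuclideanSpace ℝ (Fin n)) ε, u (x + T y) s)
        - (u x t + ut * (s - t) + Qc)| ≤ Eδ := by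
    intro s hs
    have hsIcc : s ∈ Set.Icc (t-τ) t := Set.Ioc_subset_Icc_self hs
    have hRint : IntegrableOn (fun y => u (x + T y) s - P y s)
        (Metric.ball (0:EuclideanSpace ℝ (Fin n)) ε) := (hUint s hsIcc).sub (hPint s)
    have hbound : ‖∫ y in Metric.ball (0:EuclideanSpace ℝ (Fin n)) ε,
        (u (x + T y) s - P y s)‖ ≤ Eδ * V := by
      rw [hVdef]
      apply norm_setIntegral_le_of_norm_le_const measure_ball_lt_top
      · intro y hy
        rw [Real.norm_eq_abs]
        exact hstep s hs y hy
    rw [integral_sub (hUint s hsIcc) (hPint s), hPeval s] at hbound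
    rw [Real.norm_eq_abs] at hbound
    have key : V⁻¹ * (∫ y in Metric.ball (0:EuclideanSpace ℝ (Fin n)) ε, u (x + T y) s)
        - (u x t + ut * (s - t) + Qc)
        = V⁻¹ * ((∫ y in Metric.ball (0:EuclideanSpace ℝ (Fin n)) ε, u (x + T y) s)
            - V * (u x t + ut * (s - t) + Qc)) := by
      field_simp
    rw [key, abs_mul, abs_of_pos (inv_pos.mpr hV)]
    calc V⁻¹ * |(∫ y in Metric.ball (0:EuclideanSpace ℝ (Fin n)) ε, u (x + T y) s)
          - V * (u x t + ut * (s - t) + Qc)| ≤ V⁻¹ * (Eδ * V) := by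
          exact mul_le_mul_of_nonneg_left hbound (inv_pos.mpr hV).le
      _ = Eδ := by field_simp
  -- integrability in time
  have hφcont : ContinuousOn (fun s => ∫ y in Metric.ball (0:EuclideanSpace ℝ (Fin n)) ε,
      u (x + T y) s) (Set.Icc (t-τ) t) := by
    apply continuousOn_param_integral (fun p : EuclideanSpace ℝ (Fin n) × ℝ => u (x + T p.1) p.2)
    have hco : Continuous (fun p : EuclideanSpace ℝ (Fin n) × ℝ => (x + T p.1, p.2)) :=
      (continuous_const.add (T.continuous.comp continuous_fst)).prodMk continuous_snd
    exact hcont'.comp hco.continuousOn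
      (fun p hp => hmaps p.1 (mem_closedBall_zero_iff.mp hp.1) p.2 hp.2)
  have hφint : IntegrableOn (fun s => V⁻¹ * ∫ y in Metric.ball (0:EuclideanSpace ℝ (Fin n)) ε,
      u (x + T y) s) (Set.Ioc (t-τ) t) :=
    ((hφcont.integrableOn_compact isCompact_Icc).mono_set Set.Ioc_subset_Icc_self).const_mul _
  -- the time integral of the main term
  have hst : IntegrableOn (fun s : ℝ => s - t) (Set.Ioc (t-τ) t) :=
    ((continuous_id.sub continuous_const).continuousOn.integrableOn_compact
      isCompact_Icc).mono_set Set.Ioc_subset_Icc_self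
  have hKint : IntegrableOn (fun s => u x t + ut * (s - t) + Qc) (Set.Ioc (t-τ) t) := by
    apply Integrable.add (Integrable.add _ (hst.const_mul ut)) _
    · exact integrableOn_const measure_Ioc_lt_top.ne
    · exact integrableOn_const measure_Ioc_lt_top.ne
  have hvolIoc : (volume (Set.Ioc (t-τ) t)).toReal = τ := by
    rw [Real.volume_Ioc, ENNReal.toReal_ofReal (by linarith)]
    ring
  have hK : ∫ s in Set.Ioc (t-τ) t, (u x t + ut * (s - t) + Qc)
      = τ * (u x t + Qc) + ut * (-τ^2/2) := by
    have hcongr : ∀ s ∈ Set.Ioc (t-τ) t, u x t + ut * (s - t) + Qc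
        = (u x t + Qc) + ut * (s - t) := fun s _ => by ring
    rw [setIntegral_congr_fun measurableSet_Ioc hcongr,
      integral_add (μ := volume.restrict (Set.Ioc (t-τ) t)) (f := fun _ => u x t + Qc)
        (g := fun s => ut * (s - t)) (by exact integrableOn_const measure_Ioc_lt_top.ne)
        (hst.const_mul ut),
      setIntegral_const, integral_const_mul, integral_time_piece t τ hτpos.le, measureReal_def, hvolIoc,
      smul_eq_mul]
  -- bound the time-integrated error
  set Err : ℝ := ∫ s in Set.Ioc (t-τ) t,
      ((V⁻¹ * ∫ y in Metric.ball (0:EuclideanSpace ℝ (Fin n)) ε, u (x + T y) s)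
        - (u x t + ut * (s - t) + Qc)) with hErrdef
  have hErr : |Err| ≤ Eδ * τ := by
    have h := norm_setIntegral_le_of_norm_le_const (μ := volume) (s := Set.Ioc (t-τ) t)
      (C := Eδ) measure_Ioc_lt_top
      (fun s hs => by rw [Real.norm_eq_abs]; exact havg s hs)
    rw [measureReal_def, hvolIoc, Real.norm_eq_abs] at h
    rw [hErrdef]
    exact h
  have hI : (∫ s in Set.Ioc (t-τ) t,
        V⁻¹ * ∫ y in Metric.ball (0:EuclideanSpace ℝ (Fin n)) ε, u (x + T y) s)
      = (τ * (u x t + Qc) + ut * (-τ^2/2)) + Err := by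
    rw [hErrdef, integral_sub hφint hKint, hK]
    ring
  rw [hI]
  -- final algebra
  have hεne : ε ≠ 0 := hεpos.ne'
  have hident : ((n:ℝ) + 2) / (b * ε ^ 2) *
        ((τ * (u x t + Qc) + ut * (-τ^2/2)) + Err)
      - u x t - (ε ^ 2 / (2 * ((n:ℝ) + 2))) * ((Aᵀ * H * A).trace - b * ut)
      = τ⁻¹ * Err := by
    rw [hτdef, hQcdef]
    field_simp
    ring
  rw [hident]
  have hEδτ : Eδ = C * ε^2 := by
    rw [hEδdef, hτdef, hδdef, hM₀def]
    field_simp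
  rw [Real.norm_eq_abs, Real.norm_eq_abs, abs_mul, abs_of_pos (inv_pos.mpr hτpos),
    abs_of_pos (by positivity : (0:ℝ) < ε^2)]
  calc τ⁻¹ * |Err| ≤ τ⁻¹ * (Eδ * τ) := mul_le_mul_of_nonneg_left hErr (inv_pos.mpr hτpos).le
    _ = Eδ := by field_simp
    _ = C * ε^2 := hEδτ
end
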